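/- arXiv:1005.3616 — 9 statements merged into one kernel-verified Lean document; each statement's English description precedes it below -/
import Mathlib

section
/- Let A and B be disjoint sets each of cardinality n > 1, and let H be the 3-uniform hypergraph on A ∪ B whose hyperedges are all triples meeting both A and B. Then cf(H) = 2 and um(H) ≥ n. -/
def IsCFColoring {V : Type*} (E : Finset (Finset V)) (C : V → ℕ) : Prop :=
  ∀ e ∈ E, e.Nonempty → ∃ x ∈ e, ∀ y ∈ e, y ≠ x → C y ≠ C x

def IsUMColoring {V : Type*} (E : Finset (Finset V)) (C : V → ℕ) : Prop :=
  ∀ e ∈ E, e.Nonempty → ∃ x ∈ e, ∀ y ∈ e, y ≠ x → C y < C x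

noncomputable def cfNum {V : Type*} (E : Finset (Finset V)) : ℕ :=
  sInf {k | ∃ C : V → ℕ, (∀ v, C v < k) ∧ IsCFColoring E C}

noncomputable def umNum {V : Type*} (E : Finset (Finset V)) : ℕ :=
  sInf {k | ∃ C : V → ℕ, (∀ v, C v < k) ∧ IsUMColoring E C}

/-!
Colouring `B` with `1` and everything else with `0` is conflict-free: a triple meeting both
sides has exactly one vertex on one of them. One colour cannot be conflict-free on a triple.

In a unique-maximum colouring with fewer than `n` colours, pigeonhole gives `u ≠ v` in `A` and
`s ≠ t` in `B` with `C u = C v` and `C s = C t`. The maximum of `{u, v, s}` must then be `s`,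
and the maximum of `{s, t, u}` must be `u`, which is absurd.
-/

open Finset

theorem Finset.exists_mem_forall_ne_not_of_card_filter_eq_one {α : Type*} {s : Finset α}
    {p : α → Prop} [DecidablePred p] (h : #(s.filter p) = 1) :
    ∃ x ∈ s, p x ∧ ∀ y ∈ s, y ≠ x → ¬ p y := by
  obtain ⟨x, hx⟩ := card_eq_one.mp h
  have hxs : x ∈ s.filter p := hx ▸ mem_singleton_self x
  refine ⟨x, (mem_filter.mp hxs).1, (mem_filter.mp hxs).2, fun y hy hyx hpy => hyx ?_⟩
  simpa [hx] using mem_filter.mpr ⟨hy, hpy⟩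

section Colorings

variable {V : Type*} {E : Finset (Finset V)} {C : V → ℕ}

theorem IsCFColoring.exists_ne (hC : IsCFColoring E C) {e : Finset V} (he : e ∈ E)
    (he₂ : 1 < #e) : ∃ x ∈ e, ∃ y ∈ e, C x ≠ C y := by
  obtain ⟨x, hx, hxu⟩ := hC e he (card_pos.mp (by omega))
  obtain ⟨y, hy, hyx⟩ := exists_mem_ne he₂ x
  exact ⟨y, hy, x, hx, hxu y hy hyx⟩

theorem cfNum_eq_two (hC : ∃ C : V → ℕ, (∀ v, C v < 2) ∧ IsCFColoring E C) {e : Finset V}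
    (he : e ∈ E) (he₂ : 1 < #e) : cfNum E = 2 := by
  refine le_antisymm (Nat.sInf_le hC) (le_csInf ⟨2, hC⟩ ?_)
  rintro k ⟨C, hCk, hC⟩
  obtain ⟨x, -, y, -, hxy⟩ := hC.exists_ne he he₂
  have := hCk x
  have := hCk y
  omega

theorem isUMColoring_of_injOn (hC : ∀ e ∈ E, Set.InjOn C e) : IsUMColoring E C := by
  intro e he hne
  obtain ⟨x, hx, hmax⟩ := e.exists_max_image C hne
  exact ⟨x, hx, fun y hy hyx => (hmax y hy).lt_of_ne fun h => hyx (hC e he hy hx h)⟩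

theorem exists_isUMColoring [DecidableEq V] (E : Finset (Finset V)) :
    ∃ k, ∃ C : V → ℕ, (∀ v, C v < k) ∧ IsUMColoring E C := by
  set S := E.sup id
  let C : V → ℕ := fun v => if h : v ∈ S then S.equivFin ⟨v, h⟩ else 0
  refine ⟨#S + 1, C, fun v => ?_, isUMColoring_of_injOn fun e he x hx y hy hxy => ?_⟩
  · by_cases h : v ∈ S <;> simp only [C, h, dite_true, dite_false] <;> omega
  · have hS : e ≤ S := le_sup (f := id) he
    have hxy' := S.equivFin.injective (Fin.ext (by simpa [C, hS hx, hS hy] using hxy))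
    exact congrArg Subtype.val hxy'

theorem le_umNum [DecidableEq V] {m : ℕ}
    (h : ∀ k, ∀ C : V → ℕ, (∀ v, C v < k) → IsUMColoring E C → m ≤ k) : m ≤ umNum E :=
  le_csInf (exists_isUMColoring E) fun _ ⟨C, hCk, hC⟩ => h _ C hCk hC

theorem IsUMColoring.lt_of_mem_triple [DecidableEq V] (hC : IsUMColoring E C) {u v w : V}
    (he : {u, v, w} ∈ E) (huv : u ≠ v) (hc : C u = C v) : C u < C w := by
  obtain ⟨x, hx, hmax⟩ := hC _ he ⟨u, by simp⟩
  simp only [mem_insert, mem_singleton] at hx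
  rcases hx with rfl | rfl | rfl
  · exact absurd (hmax v (by simp) huv.symm) (by omega)
  · exact absurd (hmax u (by simp) huv) (by omega)
  · exact hmax u (by simp) (by rintro rfl; exact absurd (hmax v (by simp) huv.symm) (by omega))

end Colorings

section BipartiteTriples

variable {V : Type*} [DecidableEq V] {A B : Finset V}

def bipartiteTriples (A B : Finset V) : Finset (Finset V) :=
  ((A ∪ B).powersetCard 3).filter (fun e => (e ∩ A).Nonempty ∧ (e ∩ B).Nonempty)

theorem bipartiteTriples_comm (A B : Finset V) : bipartiteTriples A B = bipartiteTriples B A := by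
  simp only [bipartiteTriples, union_comm A B, and_comm]

theorem card_of_mem_bipartiteTriples {e : Finset V} (he : e ∈ bipartiteTriples A B) :
    #e = 3 :=
  (mem_powersetCard.mp (mem_filter.mp he).1).2

theorem insert_insert_singleton_mem_bipartiteTriples (hd : Disjoint A B) {u v w : V}
    (hu : u ∈ A) (hv : v ∈ A) (hw : w ∈ B) (huv : u ≠ v) :
    {u, v, w} ∈ bipartiteTriples A B := by
  have hwu : w ≠ u := fun h => disjoint_left.mp hd hu (h ▸ hw)
  have hwv : w ≠ v := fun h => disjoint_left.mp hd hv (h ▸ hw)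
  refine mem_filter.mpr ⟨mem_powersetCard.mpr ⟨?_, ?_⟩, ⟨u, by simp [hu]⟩, ⟨w, by simp [hw]⟩⟩
  · simp [insert_subset_iff, hu, hv, hw]
  · rw [card_insert_of_notMem (by simp [huv, hwu.symm]), card_pair hwv.symm]

theorem isCFColoring_bipartiteTriples (hd : Disjoint A B) :
    IsCFColoring (bipartiteTriples A B) (fun v => if v ∈ B then 1 else 0) := by
  intro e he _
  obtain ⟨-, ⟨a, ha⟩, ⟨b, hb⟩⟩ := mem_filter.mp he
  have hsplit : #(e.filter (· ∈ B)) + #(e.filter (· ∉ B)) = 3 := by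
    rw [card_filter_add_card_filter_not, card_of_mem_bipartiteTriples he]
  have hB : 0 < #(e.filter (· ∈ B)) := card_pos.mpr ⟨b, by simpa using hb⟩
  have hA : 0 < #(e.filter (· ∉ B)) :=
    card_pos.mpr ⟨a, mem_filter.mpr ⟨(mem_inter.mp ha).1, disjoint_left.mp hd (mem_inter.mp ha).2⟩⟩
  obtain h | h : #(e.filter (· ∈ B)) = 1 ∨ #(e.filter (· ∉ B)) = 1 := by omega
  · obtain ⟨x, hx, hxB, hothers⟩ := exists_mem_forall_ne_not_of_card_filter_eq_one h
    exact ⟨x, hx, fun y hy hyx => by simp [hxB, hothers y hy hyx]⟩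
  · obtain ⟨x, hx, hxB, hothers⟩ := exists_mem_forall_ne_not_of_card_filter_eq_one h
    exact ⟨x, hx, fun y hy hyx => by simp [hxB, not_not.mp (hothers y hy hyx)]⟩

theorem cfNum_bipartiteTriples (hd : Disjoint A B) (hA : 1 < #A) (hB : B.Nonempty) :
    cfNum (bipartiteTriples A B) = 2 := by
  obtain ⟨u, hu, v, hv, huv⟩ := one_lt_card.mp hA
  obtain ⟨w, hw⟩ := hB
  have he := insert_insert_singleton_mem_bipartiteTriples hd hu hv hw huv
  refine cfNum_eq_two ⟨_, fun v => ?_, isCFColoring_bipartiteTriples hd⟩ he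
    (by rw [card_of_mem_bipartiteTriples he]; norm_num)
  split_ifs <;> omega

theorem min_card_le_umNum_bipartiteTriples (hd : Disjoint A B) :
    min #A #B ≤ umNum (bipartiteTriples A B) := by
  refine le_umNum fun k C hCk hC => ?_
  by_contra! hk
  have hpigeon : ∀ s : Finset V, k < #s → ∃ x ∈ s, ∃ y ∈ s, x ≠ y ∧ C x = C y := fun s hs =>
    exists_ne_map_eq_of_card_lt_of_maps_to (t := range k) (by simpa using hs)
      fun v _ => mem_range.mpr (hCk v)
  obtain ⟨u, hu, v, hv, huv, hCuv⟩ := hpigeon A (by omega)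
  obtain ⟨s, hs, t, ht, hst, hCst⟩ := hpigeon B (by omega)
  have hus : C u < C s :=
    hC.lt_of_mem_triple (insert_insert_singleton_mem_bipartiteTriples hd hu hv hs huv) huv hCuv
  have hsu : C s < C u := by
    refine hC.lt_of_mem_triple ?_ hst hCst
    rw [bipartiteTriples_comm]
    exact insert_insert_singleton_mem_bipartiteTriples hd.symm hs ht hu hst
  omega

end BipartiteTriples

theorem cf_two_um_ge_n_general {V : Type*} [DecidableEq V]
    (A B : Finset V) (n : ℕ) (hd : Disjoint A B)
    (hA : A.card = n) (hB : B.card = n) (hn : 1 < n)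
    (E : Finset (Finset V))
    (hE : E = ((A ∪ B).powersetCard 3).filter
      (fun e => (e ∩ A).Nonempty ∧ (e ∩ B).Nonempty)) :
    cfNum E = 2 ∧ n ≤ umNum E := by
  subst hE
  refine ⟨cfNum_bipartiteTriples hd (by omega) (card_pos.mp (by omega)), ?_⟩
  have hum := min_card_le_umNum_bipartiteTriples hd
  rwa [hA, hB, min_self] at hum

/-- For disjoint sets `A`, `B` of size `n > 1` and the 3-uniform hypergraph on
`A ∪ B` whose hyperedges are all triples meeting both `A` and `B`,
we have `cf(H) = 2` and `um(H) ≥ n`. -/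
theorem cf_two_um_ge_n {V : Type*} [Fintype V] [DecidableEq V]
    (A B : Finset V) (n : ℕ) (hd : Disjoint A B)
    (hA : A.card = n) (hB : B.card = n) (hn : 1 < n)
    (E : Finset (Finset V))
    (hE : E = ((A ∪ B).powersetCard 3).filter
      (fun e => (e ∩ A).Nonempty ∧ (e ∩ B).Nonempty)) :
    cfNum E = 2 ∧ n ≤ umNum E :=
  cf_two_um_ge_n_general A B n hd hA hB hn E hE
end

section
/- Let P be a set of n points in the plane with distinct x- and y-coordinates, and let D(P) be the graph on P where two points p, q are adjacent if and only if the closed axis-parallel rectangle with corners p and q contains no other point of P. Then D(P) has an independent set of size at least ⌈√n / 2⌉ (more precisely, Ω(√n)). -/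
/-- `p` and `q` are adjacent in the Delaunay graph of `P` with respect to
axis-parallel rectangles: the closed rectangle spanned by `p` and `q`
contains no other point of `P`. -/
def RectAdj (P : Finset (ℝ × ℝ)) (p q : ℝ × ℝ) : Prop :=
  p ≠ q ∧ ∀ r ∈ P, r ≠ p → r ≠ q →
    ¬(min p.1 q.1 ≤ r.1 ∧ r.1 ≤ max p.1 q.1 ∧
      min p.2 q.2 ≤ r.2 ∧ r.2 ≤ max p.2 q.2)

/-!
Order the plane componentwise. By Mirsky's theorem some chain or antichain `C ⊆ P` has at least
`√n` points (this is the Erdős–Szekeres theorem: chains are increasing, antichains decreasing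
point sequences). List `C` in the lexicographic order, a linear extension of the componentwise
one, and keep every other point: between two kept points `p`, `q` lies a skipped point `r` of `C`,
and monotonicity of `C` puts `r` in the rectangle spanned by `p` and `q`.
-/

open Finset

namespace Finset

section Mirsky

open scoped Classical

variable {α : Type*} [PartialOrder α] (s : Finset α)

noncomputable def heightBelow (x : α) : ℕ :=
  (s.powerset.filter fun t : Finset α => IsChain (· ≤ ·) (t : Set α) ∧ ∀ y ∈ t, y ≤ x).sup card

variable {s}

lemma card_le_heightBelow {t : Finset α} {x : α} (hts : t ⊆ s) (ht : IsChain (· ≤ ·) (t : Set α))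
    (htx : ∀ y ∈ t, y ≤ x) : #t ≤ s.heightBelow x :=
  le_sup (f := card) (mem_filter.2 ⟨mem_powerset.2 hts, ht, htx⟩)

lemma exists_isChain_card_eq_heightBelow (x : α) :
    ∃ t ⊆ s, IsChain (· ≤ ·) (t : Set α) ∧ (∀ y ∈ t, y ≤ x) ∧ #t = s.heightBelow x := by
  obtain ⟨t, ht, heq⟩ := exists_mem_eq_sup
    (s.powerset.filter fun t : Finset α => IsChain (· ≤ ·) (t : Set α) ∧ ∀ y ∈ t, y ≤ x)
    ⟨∅, mem_filter.2 ⟨empty_mem_powerset s, by simp⟩⟩ card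
  obtain ⟨hts, hchain, htx⟩ := mem_filter.1 ht
  exact ⟨t, mem_powerset.1 hts, hchain, htx, heq.symm⟩

lemma one_le_heightBelow {x : α} (hx : x ∈ s) : 1 ≤ s.heightBelow x :=
  card_le_heightBelow (singleton_subset_iff.2 hx) (by simp) (by simp)

lemma heightBelow_lt_heightBelow {x y : α} (hy : y ∈ s) (hxy : x < y) :
    s.heightBelow x < s.heightBelow y := by
  obtain ⟨t, hts, hchain, htx, hcard⟩ := s.exists_isChain_card_eq_heightBelow x
  have hyt : y ∉ t := fun h => (htx y h).not_gt hxy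
  have hbelow : ∀ z ∈ t, z ≤ y := fun z hz => (htx z hz).trans hxy.le
  calc s.heightBelow x < #(insert y t) := by rw [card_insert_of_notMem hyt, hcard]; omega
    _ ≤ s.heightBelow y := by
      refine card_le_heightBelow (insert_subset hy hts) ?_ (by simpa using hbelow)
      rw [coe_insert]
      exact hchain.insert fun z hz _ => Or.inr (hbelow z hz)

/-- Mirsky's theorem: `heightBelow` maps `s` into `[1, a]` and its level sets are antichains. -/
theorem card_le_mul_of_isChain_of_isAntichain {a b : ℕ}
    (ha : ∀ t ⊆ s, IsChain (· ≤ ·) (t : Set α) → #t ≤ a)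
    (hb : ∀ t ⊆ s, IsAntichain (· ≤ ·) (t : Set α) → #t ≤ b) : #s ≤ a * b := by
  have hmaps : ∀ x ∈ s, s.heightBelow x ∈ Icc 1 a := fun x hx =>
    mem_Icc.2 ⟨one_le_heightBelow hx, Finset.sup_le fun t ht =>
      ha t (mem_powerset.1 (mem_filter.1 ht).1) (mem_filter.1 ht).2.1⟩
  have hlevel : ∀ k ∈ Icc 1 a, #{x ∈ s | s.heightBelow x = k} ≤ b := by
    refine fun k _ => hb _ (filter_subset _ _) fun x hx y hy hne hxy => ?_
    obtain ⟨hxs, rfl⟩ := mem_filter.1 hx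
    exact (heightBelow_lt_heightBelow (mem_filter.1 hy).1 (hxy.lt_of_ne hne)).ne
      (mem_filter.1 hy).2.symm
  simpa [mul_comm] using card_le_mul_card_image_of_maps_to hmaps b hlevel

end Mirsky

theorem exists_isChain_or_isAntichain_sqrt_card_le {α : Type*} [PartialOrder α] (s : Finset α) :
    ∃ t ⊆ s, (IsChain (· ≤ ·) (t : Set α) ∨ IsAntichain (· ≤ ·) (t : Set α)) ∧
      √(#s : ℝ) ≤ #t := by
  classical
  obtain ⟨c, hc, hcmax⟩ := exists_max_image
    (s.powerset.filter fun t : Finset α => IsChain (· ≤ ·) (t : Set α)) card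
    ⟨∅, mem_filter.2 ⟨empty_mem_powerset s, by simp⟩⟩
  obtain ⟨u, hu, humax⟩ := exists_max_image
    (s.powerset.filter fun t : Finset α => IsAntichain (· ≤ ·) (t : Set α)) card
    ⟨∅, mem_filter.2 ⟨empty_mem_powerset s, by simp⟩⟩
  simp only [mem_filter, mem_powerset, and_imp] at hc hu hcmax humax
  have hs : (#s : ℝ) ≤ #c * #u := by
    exact_mod_cast card_le_mul_of_isChain_of_isAntichain hcmax humax
  rcases le_total #u #c with hle | hle
  · refine ⟨c, hc.1, .inl hc.2, Real.sqrt_le_iff.2 ⟨by positivity, ?_⟩⟩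
    have : (#u : ℝ) ≤ #c := by exact_mod_cast hle
    nlinarith
  · refine ⟨u, hu.1, .inr hu.2, Real.sqrt_le_iff.2 ⟨by positivity, ?_⟩⟩
    have : (#c : ℝ) ≤ #u := by exact_mod_cast hle
    nlinarith

theorem exists_subset_card_ge_half_separated {α : Type*} [LinearOrder α] (s : Finset α) :
    ∃ t ⊆ s, #s ≤ 2 * #t ∧ ∀ a ∈ t, ∀ b ∈ t, a < b → ∃ c ∈ s, a < c ∧ c < b := by
  set k := #s
  let f := s.orderEmbOfFin rfl
  let g : Fin ((k + 1) / 2) → α := fun i => f ⟨2 * i, by omega⟩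
  have hg : g.Injective := fun i j h => by
    simpa [g, Fin.ext_iff] using f.injective h
  refine ⟨univ.image g, ?_, ?_, ?_⟩
  · intro x hx
    obtain ⟨i, -, rfl⟩ := mem_image.1 hx
    exact s.orderEmbOfFin_mem rfl _
  · rw [card_image_of_injective _ hg, card_univ, Fintype.card_fin]
    omega
  · simp only [mem_image, mem_univ, true_and, forall_exists_index, forall_apply_eq_imp_iff]
    intro i j hij
    have hij' : 2 * (i : ℕ) < 2 * j := Fin.lt_def.1 (f.lt_iff_lt.1 hij)
    exact ⟨f ⟨2 * i + 1, by omega⟩, s.orderEmbOfFin_mem rfl _,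
      f.lt_iff_lt.2 (Fin.lt_def.2 (by simp)), f.lt_iff_lt.2 (Fin.lt_def.2 (by simp; omega))⟩

end Finset

namespace Prod

variable {α β : Type*}

lemma le_of_toLex_lt_of_isChain [PartialOrder α] [Preorder β] {C : Set (α × β)}
    (hC : IsChain (· ≤ ·) C) {p q : α × β} (hp : p ∈ C) (hq : q ∈ C)
    (hpq : toLex p < toLex q) : p ≤ q :=
  (hC.total hp hq).resolve_right fun hqp => (Lex.toLex_mono hqp).not_gt hpq

lemma snd_lt_of_toLex_lt_of_isAntichain [Preorder α] [LinearOrder β] {C : Set (α × β)}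
    (hC : IsAntichain (· ≤ ·) C) {p q : α × β} (hp : p ∈ C) (hq : q ∈ C)
    (hpq : toLex p < toLex q) : q.2 < p.2 :=
  lt_of_not_ge fun h => hC hp hq (by rintro rfl; exact hpq.false)
    ⟨Lex.monotone_fst _ _ hpq.le, h⟩

lemma mem_uIcc_of_toLex_lt_of_toLex_lt [LinearOrder α] [LinearOrder β] {C : Set (α × β)}
    (hC : IsChain (· ≤ ·) C ∨ IsAntichain (· ≤ ·) C) {p q r : α × β}
    (hp : p ∈ C) (hq : q ∈ C) (hr : r ∈ C) (hpr : toLex p < toLex r) (hrq : toLex r < toLex q) :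
    r.1 ∈ Set.uIcc p.1 q.1 ∧ r.2 ∈ Set.uIcc p.2 q.2 := by
  refine ⟨Set.Icc_subset_uIcc ⟨Lex.monotone_fst _ _ hpr.le, Lex.monotone_fst _ _ hrq.le⟩, ?_⟩
  rcases hC with hC | hC
  · exact Set.Icc_subset_uIcc
      ⟨(le_of_toLex_lt_of_isChain hC hp hr hpr).2, (le_of_toLex_lt_of_isChain hC hr hq hrq).2⟩
  · exact Set.Icc_subset_uIcc'
      ⟨(snd_lt_of_toLex_lt_of_isAntichain hC hr hq hrq).le,
        (snd_lt_of_toLex_lt_of_isAntichain hC hp hr hpr).le⟩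

end Prod

lemma rectAdj_comm {P : Finset (ℝ × ℝ)} {p q : ℝ × ℝ} : RectAdj P p q ↔ RectAdj P q p := by
  simp only [RectAdj, ne_comm, min_comm p.1, max_comm p.1, min_comm p.2, max_comm p.2]
  exact ⟨fun h => ⟨h.1, fun r hr hrq hrp => h.2 r hr hrp hrq⟩,
    fun h => ⟨h.1, fun r hr hrp hrq => h.2 r hr hrq hrp⟩⟩

lemma not_rectAdj_of_mem_uIcc {P : Finset (ℝ × ℝ)} {p q r : ℝ × ℝ} (hr : r ∈ P) (hrp : r ≠ p)
    (hrq : r ≠ q) (h : r.1 ∈ Set.uIcc p.1 q.1 ∧ r.2 ∈ Set.uIcc p.2 q.2) : ¬RectAdj P p q :=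
  fun hpq => hpq.2 r hr hrp hrq ⟨h.1.1, h.1.2, h.2.1, h.2.2⟩

theorem exists_rectIndependent_of_isChain_or_isAntichain {P C : Finset (ℝ × ℝ)} (hCP : C ⊆ P)
    (hC : IsChain (· ≤ ·) (C : Set (ℝ × ℝ)) ∨ IsAntichain (· ≤ ·) (C : Set (ℝ × ℝ))) :
    ∃ S ⊆ C, (∀ p ∈ S, ∀ q ∈ S, p ≠ q → ¬RectAdj P p q) ∧ #C ≤ 2 * #S := by
  obtain ⟨t, ht, hcard, hgap⟩ :=
    (C.map toLex.toEmbedding).exists_subset_card_ge_half_separated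
  have htC : ∀ x, toLex x ∈ t → x ∈ C := fun x hx => by simpa using ht hx
  refine ⟨t.map ofLex.toEmbedding, fun p hp => htC p (by simpa using hp), ?_,
    by simpa using hcard⟩
  intro p hp q hq hpq
  simp only [mem_map_equiv] at hp hq
  wlog hlt : toLex p < toLex q generalizing p q
  · rw [rectAdj_comm]
    exact this q p hpq.symm hq hp (lt_of_le_of_ne (not_lt.1 hlt) (toLex.injective.ne hpq.symm))
  obtain ⟨c, hc, hpc, hcq⟩ := hgap _ hp _ hq hlt
  have hcC : ofLex c ∈ C := by simpa using hc
  exact not_rectAdj_of_mem_uIcc (hCP hcC) (by rintro rfl; exact hpc.false)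
    (by rintro rfl; exact hcq.false)
    (Prod.mem_uIcc_of_toLex_lt_of_toLex_lt hC (htC p hp) (htC q hq) hcC hpc hcq)

theorem rect_delaunay_independent_set_general (P : Finset (ℝ × ℝ)) :
    ∃ S ⊆ P, (∀ p ∈ S, ∀ q ∈ S, p ≠ q → ¬ RectAdj P p q) ∧
      ⌈Real.sqrt P.card / 2⌉₊ ≤ S.card := by
  obtain ⟨C, hCP, hC, hsqrt⟩ := P.exists_isChain_or_isAntichain_sqrt_card_le
  obtain ⟨S, hSC, hindep, hcard⟩ := exists_rectIndependent_of_isChain_or_isAntichain hCP hC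
  refine ⟨S, hSC.trans hCP, hindep, Nat.ceil_le.2 ?_⟩
  have : (#C : ℝ) ≤ 2 * #S := by exact_mod_cast hcard
  linarith

/-- The rectangle Delaunay graph of a planar point set with distinct `x`- and
`y`-coordinates has an independent set of size at least `⌈√n / 2⌉`. -/
theorem rect_delaunay_independent_set (P : Finset (ℝ × ℝ))
    (hx : ∀ p ∈ P, ∀ q ∈ P, p.1 = q.1 → p = q)
    (hy : ∀ p ∈ P, ∀ q ∈ P, p.2 = q.2 → p = q) :
    ∃ S ⊆ P, (∀ p ∈ S, ∀ q ∈ S, p ≠ q → ¬ RectAdj P p q) ∧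
      ⌈Real.sqrt P.card / 2⌉₊ ≤ S.card :=
  rect_delaunay_independent_set_general P
end

section
/- Every hypergraph H with m hyperedges admits a unique-maximum (hence conflict-free) coloring with at most 1/2 + √(2m + 1/4) colors. -/
open Finset

/-- Any hypergraph in which every vertex lies in at most `d` edges admits a
unique-maximum coloring with `d+1` colors. -/
lemma exists_um_of_maxdeg {V : Type*} [Fintype V] [DecidableEq V] (d : ℕ) :
    ∀ E : Finset (Finset V), (∀ v : V, (E.filter (fun e => v ∈ e)).card ≤ d) →
      ∃ C : V → ℕ, (∀ v, C v < d + 1) ∧ IsUMColoring E C := by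
  classical
  induction d with
  | zero =>
      intro E hdeg
      refine ⟨fun _ => 0, fun _ => Nat.zero_lt_one, ?_⟩
      rintro e heE ⟨v, hv⟩
      exfalso
      have h1 : e ∈ E.filter (fun e => v ∈ e) := mem_filter.2 ⟨heE, hv⟩
      have h2 : 0 < (E.filter (fun e => v ∈ e)).card := card_pos.2 ⟨e, h1⟩
      have := hdeg v
      omega
  | succ d ih =>
      intro E hdeg
      -- choose a maximum-cardinality "independent" set S
      have h0 : (∅ : Finset V) ∈ univ.powerset.filter
          (fun S => ∀ e ∈ E, (e ∩ S).card ≤ 1) := by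
        simp
      obtain ⟨S, hSmem, hSmax⟩ := Finset.exists_max_image
        (univ.powerset.filter (fun S => ∀ e ∈ E, (e ∩ S).card ≤ 1))
        Finset.card ⟨∅, h0⟩
      have hQS : ∀ e ∈ E, (e ∩ S).card ≤ 1 := (mem_filter.1 hSmem).2
      have hmaximal : ∀ v : V, v ∉ S → ∃ e ∈ E, 2 ≤ (e ∩ insert v S).card := by
        intro v hv
        by_contra hcon
        push_neg at hcon
        have hmem' : insert v S ∈ univ.powerset.filter
            (fun S => ∀ e ∈ E, (e ∩ S).card ≤ 1) := by
          refine mem_filter.2 ⟨mem_powerset.2 (subset_univ _), fun e he => ?_⟩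
          have := hcon e he
          omega
        have h1 := hSmax _ hmem'
        have h2 : (insert v S).card = S.card + 1 := card_insert_of_notMem hv
        omega
      set E' := E.filter (fun e => e ∩ S = ∅) with hE'def
      have hdeg' : ∀ v : V, (E'.filter (fun e => v ∈ e)).card ≤ d := by
        intro v
        by_contra hcon
        push_neg at hcon
        obtain ⟨e₁, he₁⟩ : ∃ e₁, e₁ ∈ E'.filter (fun e => v ∈ e) := by
          have : 0 < (E'.filter (fun e => v ∈ e)).card := by omega
          obtain ⟨e₁, he₁⟩ := card_pos.1 this
          exact ⟨e₁, he₁⟩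
        have he₁E' : e₁ ∈ E' := (mem_filter.1 he₁).1
        have hve₁ : v ∈ e₁ := (mem_filter.1 he₁).2
        have hvS : v ∉ S := by
          intro hvS
          have h0' : e₁ ∩ S = ∅ := (mem_filter.1 he₁E').2
          have : v ∈ e₁ ∩ S := mem_inter.2 ⟨hve₁, hvS⟩
          rw [h0'] at this
          exact notMem_empty v this
        obtain ⟨e₀, he₀E, he₀card⟩ := hmaximal v hvS
        have hQe₀ := hQS e₀ he₀E
        have hv0 : v ∈ e₀ := by
          by_contra hv0
          have heq : e₀ ∩ insert v S = e₀ ∩ S := by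
            ext u
            simp only [mem_inter, mem_insert]
            constructor
            · rintro ⟨hu, hu' | hu'⟩
              · exact absurd (hu' ▸ hu) hv0
              · exact ⟨hu, hu'⟩
            · rintro ⟨hu, hu'⟩; exact ⟨hu, Or.inr hu'⟩
          rw [heq] at he₀card
          omega
        have hS0 : ¬ (e₀ ∩ S = ∅) := by
          intro h0'
          have hsub : e₀ ∩ insert v S ⊆ {v} := by
            intro u hu
            rcases mem_inter.1 hu with ⟨hue, hus⟩
            rcases mem_insert.1 hus with h | h
            · simp [h]
            · exfalso
              have : u ∈ e₀ ∩ S := mem_inter.2 ⟨hue, h⟩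
              rw [h0'] at this
              exact notMem_empty u this
          have := card_le_card hsub
          simp at this
          omega
        have he₀mem : e₀ ∈ E.filter (fun e => v ∈ e) := mem_filter.2 ⟨he₀E, hv0⟩
        have hsub : E'.filter (fun e => v ∈ e) ⊆ (E.filter (fun e => v ∈ e)).erase e₀ := by
          intro e he
          rcases mem_filter.1 he with ⟨heE', hve⟩
          refine mem_erase.2 ⟨?_, mem_filter.2 ⟨(mem_filter.1 heE').1, hve⟩⟩
          intro h
          exact hS0 (h ▸ (mem_filter.1 heE').2)
        have h1 := card_le_card hsub
        have h2 : ((E.filter (fun e => v ∈ e)).erase e₀).card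
            = (E.filter (fun e => v ∈ e)).card - 1 := card_erase_of_mem he₀mem
        have h3 := hdeg v
        omega
      obtain ⟨C', hC'lt, hC'um⟩ := ih E' hdeg'
      refine ⟨fun u => if u ∈ S then d + 1 else C' u, ?_, ?_⟩
      · intro v
        by_cases hv : v ∈ S <;> simp only [hv, if_true, if_false]
        · omega
        · have := hC'lt v; omega
      · intro e heE hene
        have hle := hQS e heE
        rcases Nat.le_one_iff_eq_zero_or_eq_one.1 hle with h0' | h1'
        · have h0'' : e ∩ S = ∅ := card_eq_zero.1 h0'
          have heE' : e ∈ E' := mem_filter.2 ⟨heE, h0''⟩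
          obtain ⟨x, hxe, hmax⟩ := hC'um e heE' hene
          have hnotS : ∀ u, u ∈ e → u ∉ S := by
            intro u hu hus
            have : u ∈ e ∩ S := mem_inter.2 ⟨hu, hus⟩
            rw [h0''] at this
            exact notMem_empty u this
          refine ⟨x, hxe, fun y hy hyx => ?_⟩
          simp only [hnotS y hy, hnotS x hxe, if_false]
          exact hmax y hy hyx
        · obtain ⟨x, hx⟩ := card_eq_one.1 h1'
          have hxmem : x ∈ e ∩ S := hx ▸ mem_singleton_self x
          have hxe : x ∈ e := (mem_inter.1 hxmem).1
          have hxS : x ∈ S := (mem_inter.1 hxmem).2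
          refine ⟨x, hxe, fun y hy hyx => ?_⟩
          have hyS : y ∉ S := by
            intro hyS
            have : y ∈ e ∩ S := mem_inter.2 ⟨hy, hyS⟩
            rw [hx] at this
            exact hyx (mem_singleton.1 this)
          simp only [hyS, hxS, if_false, if_true]
          exact hC'lt y

lemma exists_um_card_bound {V : Type*} [Fintype V] [DecidableEq V] :
    ∀ (n : ℕ) (E : Finset (Finset V)), E.card ≤ n →
      ∃ (k : ℕ) (C : V → ℕ), 1 ≤ k ∧ k * k ≤ 2 * E.card + k ∧
        (∀ v, C v < k) ∧ IsUMColoring E C := by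
  classical
  intro n
  induction n using Nat.strong_induction_on with
  | _ n IH =>
  intro E hEn
  set d := univ.sup (fun v : V => (E.filter (fun e => v ∈ e)).card) with hd
  have hdeg : ∀ v : V, (E.filter (fun e => v ∈ e)).card ≤ d := by
    intro v; rw [hd]
    exact Finset.le_sup (f := fun v : V => (E.filter (fun e => v ∈ e)).card) (mem_univ v)
  by_cases hcase : d * (d + 1) ≤ 2 * E.card
  · obtain ⟨C, hlt, hum⟩ := exists_um_of_maxdeg d E hdeg
    refine ⟨d + 1, C, by omega, ?_, hlt, hum⟩
    have h1 : (d+1) * (d+1) = d * (d+1) + (d+1) := by ring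
    omega
  · have hd1 : 1 ≤ d := by
      rcases Nat.eq_zero_or_pos d with h0 | h
      · rw [h0] at hcase; simp at hcase
      · exact h
    have hVne : (univ : Finset V).Nonempty := by
      by_contra h
      rw [not_nonempty_iff_eq_empty] at h
      have : d = 0 := by rw [hd, h]; simp
      omega
    obtain ⟨x, _, hxd⟩ := Finset.exists_mem_eq_sup univ hVne
      (fun v : V => (E.filter (fun e => v ∈ e)).card)
    set E' := E.filter (fun e => x ∉ e) with hE'def
    have hsplit : (E.filter (fun e => x ∈ e)).card + E'.card = E.card := by
      rw [hE'def]
      exact card_filter_add_card_filter_not (p := fun e => x ∈ e)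
    have hdx : (E.filter (fun e => x ∈ e)).card = d := hxd.symm
    have hE'lt : E'.card < n := by omega
    obtain ⟨k', C', hk'1, hk'2, hlt', hum'⟩ := IH E'.card hE'lt E' le_rfl
    have h2E : 2 * E.card < d * (d+1) := by omega
    have hk'd : k' ≤ d := by
      by_contra hgt
      push_neg at hgt
      have h3 : k' * (d+1) ≤ k' * k' := Nat.mul_le_mul_left k' hgt
      have h2 : (d+1) * d ≤ k' * d := Nat.mul_le_mul_right d hgt
      have e1 : k' * (d+1) = k' * d + k' := by ring
      have e2 : (d+1) * d = d * (d+1) := by ring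
      omega
    refine ⟨k' + 1, fun u => if u = x then k' else C' u, by omega, ?_, ?_, ?_⟩
    · have e1 : (k'+1) * (k'+1) = k' * k' + 2 * k' + 1 := by ring
      omega
    · intro v
      by_cases hv : v = x <;> simp only [hv, if_true, if_false]
      · omega
      · have := hlt' v; omega
    · intro e heE hene
      by_cases hxe : x ∈ e
      · refine ⟨x, hxe, fun y hy hyx => ?_⟩
        simp only [hyx, if_false, if_true]
        exact hlt' y
      · have heE' : e ∈ E' := mem_filter.2 ⟨heE, hxe⟩
        obtain ⟨z, hze, hmax⟩ := hum' e heE' hene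
        have hne : ∀ u, u ∈ e → u ≠ x := fun u hu h => hxe (h ▸ hu)
        refine ⟨z, hze, fun y hy hyz => ?_⟩
        simp only [hne y hy, hne z hze, if_false]
        exact hmax y hy hyz

/-- Every hypergraph with `m` hyperedges admits a unique-maximum (hence
conflict-free) coloring with at most `1/2 + √(2m + 1/4)` colors. -/
theorem um_le_half_add_sqrt {V : Type*} [Fintype V] (E : Finset (Finset V)) :
    ∃ (k : ℕ) (C : V → ℕ), (k : ℝ) ≤ 1 / 2 + Real.sqrt (2 * E.card + 1 / 4) ∧
      (∀ v, C v < k) ∧ IsUMColoring E C ∧ IsCFColoring E C := by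
  classical
  obtain ⟨k, C, hk1, hk2, hlt, hum⟩ := exists_um_card_bound E.card E le_rfl
  refine ⟨k, C, ?_, hlt, hum, ?_⟩
  · have hk2R : (k : ℝ) * k ≤ 2 * E.card + k := by exact_mod_cast hk2
    have hk1R : (1 : ℝ) ≤ k := by exact_mod_cast hk1
    have h0 : (0 : ℝ) ≤ (k : ℝ) - 1/2 := by linarith
    have hsq : ((k : ℝ) - 1/2) ^ 2 ≤ 2 * E.card + 1/4 := by nlinarith
    have hs := Real.sqrt_le_sqrt hsq
    rw [Real.sqrt_sq h0] at hs
    linarith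
  · intro e heE hene
    obtain ⟨z, hze, hmax⟩ := hum e heE hene
    exact ⟨z, hze, fun y hy hyz => ne_of_lt (hmax y hy hyz)⟩
end

section
/- Let H=(V,E) be a hypergraph on n vertices which is hereditarily k-colorable (every induced sub-hypergraph admits a proper coloring with k colors), set λ = k/(k-1), and let L = {L_v}_{v∈V} be lists of colors (positive integers) with Σ_{v∈V} λ^{-|L_v|} < 1. Then H admits a unique-maximum coloring f with f(v) ∈ L_v for every v. -/
/-- `H` is hereditarily `k`-colorable: every vertex-induced sub-hypergraph
admits a proper coloring with at most `k` colors. -/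
def HereditarilyColorable {V : Type*} [DecidableEq V]
    (E : Finset (Finset V)) (k : ℕ) : Prop :=
  ∀ V' : Finset V, ∃ C : V → ℕ, (∀ v, C v < k) ∧
    ∀ e ∈ E, 2 ≤ (e ∩ V').card → ∃ x ∈ e ∩ V', ∃ y ∈ e ∩ V', C x ≠ C y

namespace UMAux

open Finset

variable {V : Type*} [Fintype V] [DecidableEq V]
variable (E : Finset (Finset V)) (k : ℕ) (L : V → Finset ℕ)
  (hher : HereditarilyColorable E k)

noncomputable def lam : ℝ := (k : ℝ) / ((k : ℝ) - 1)

lemma one_lt_lam (hk : 2 ≤ k) : 1 < lam k := by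
  have h2 : (2:ℝ) ≤ (k:ℝ) := by exact_mod_cast hk
  have h1 : (0:ℝ) < (k:ℝ) - 1 := by linarith
  rw [lam, lt_div_iff₀ h1]; linarith

lemma lam_pos (hk : 2 ≤ k) : 0 < lam k := lt_trans one_pos (one_lt_lam k hk)

/-- weight of a vertex after colors `1..i` have been used. -/
noncomputable def w (i : ℕ) (v : V) : ℝ :=
  lam k ^ (-(((L v).filter (fun c => i < c)).card : ℤ))

lemma w_pos (hk : 2 ≤ k) (i : ℕ) (v : V) : 0 < w k L i v :=
  zpow_pos (lam_pos k hk) _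

lemma w_succ_of_notMem (i : ℕ) (v : V) (h : i + 1 ∉ L v) :
    w k L (i+1) v = w k L i v := by
  have : (L v).filter (fun c => i + 1 < c) = (L v).filter (fun c => i < c) := by
    apply Finset.filter_congr
    intro c hc
    have : c ≠ i + 1 := by rintro rfl; exact h hc
    constructor <;> intro <;> omega
  rw [w, w, this]

lemma w_succ_of_mem (hk : 2 ≤ k) (i : ℕ) (v : V) (h : i + 1 ∈ L v) :
    w k L (i+1) v = lam k * w k L i v := by
  have key : (L v).filter (fun c => i < c)
      = insert (i+1) ((L v).filter (fun c => i + 1 < c)) := by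
    ext c
    simp only [mem_filter, mem_insert]
    constructor
    · rintro ⟨hc, hlt⟩
      rcases eq_or_ne c (i+1) with rfl | hne
      · exact Or.inl rfl
      · exact Or.inr ⟨hc, by omega⟩
    · rintro (rfl | ⟨hc, hlt⟩)
      · exact ⟨h, by omega⟩
      · exact ⟨hc, by omega⟩
  have hnot : (i+1) ∉ (L v).filter (fun c => i + 1 < c) := by
    simp [mem_filter]
  have hcard : ((L v).filter (fun c => i < c)).card
      = ((L v).filter (fun c => i + 1 < c)).card + 1 := by
    rw [key, Finset.card_insert_of_notMem hnot]
  have hne : lam k ≠ 0 := ne_of_gt (lam_pos k hk)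
  rw [w, w, hcard]
  have hz : (-(((((L v).filter (fun c => i + 1 < c)).card + 1 : ℕ)) : ℤ))
      = -1 + -((((L v).filter (fun c => i + 1 < c)).card : ℕ) : ℤ) := by push_cast; ring
  rw [hz, zpow_add₀ hne, zpow_neg_one, ← mul_assoc, mul_inv_cancel₀ hne, one_mul]

noncomputable def col (R : Finset V) : V → ℕ := (hher R).choose

lemma col_lt (R : Finset V) (v : V) : col E k hher R v < k := (hher R).choose_spec.1 v

lemma col_prop (R : Finset V) : ∀ e ∈ E, 2 ≤ (e ∩ R).card →
    ∃ x ∈ e ∩ R, ∃ y ∈ e ∩ R, col E k hher R x ≠ col E k hher R y :=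
  (hher R).choose_spec.2

/-- weight of color class `j` among remaining-list vertices. -/
noncomputable def g (R : Finset V) (i j : ℕ) : ℝ :=
  ∑ v ∈ (R.filter (fun v => i + 1 ∈ L v)).filter (fun v => col E k hher R v = j),
    w k L i v

noncomputable def bestj (R : Finset V) (i : ℕ) : ℕ :=
  if h : (Finset.range k).Nonempty then
    (Finset.exists_max_image (Finset.range k) (g E k L hher R i) h).choose
  else 0

lemma bestj_spec (hk : 2 ≤ k) (R : Finset V) (i : ℕ) :
    ∀ j ∈ Finset.range k,
      g E k L hher R i j ≤ g E k L hher R i (bestj E k L hher R i) := by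
  have h : (Finset.range k).Nonempty := ⟨0, mem_range.mpr (by omega)⟩
  rw [bestj, dif_pos h]
  exact (Finset.exists_max_image (Finset.range k) (g E k L hher R i) h).choose_spec.2

/-- the set of vertices receiving color `i+1` when the remaining set is `R`. -/
noncomputable def Sstep (R : Finset V) (i : ℕ) : Finset V :=
  (R.filter (fun v => i + 1 ∈ L v)).filter
    (fun v => col E k hher R v = bestj E k L hher R i)

noncomputable def Rfun : ℕ → Finset V
  | 0 => Finset.univ
  | (i+1) => Rfun i \ Sstep E k L hher (Rfun i) i

lemma Rfun_anti {i j : ℕ} (h : i ≤ j) :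
    Rfun E k L hher j ⊆ Rfun E k L hher i := by
  induction j with
  | zero => simp_all
  | succ n ih =>
      rcases Nat.lt_or_ge i (n+1) with h' | h'
      · exact subset_trans (sdiff_subset) (ih (by omega))
      · have : i = n + 1 := by omega
        subst this; exact subset_rfl

noncomputable def P (i : ℕ) : ℝ := ∑ v ∈ Rfun E k L hher i, w k L i v

lemma P_succ_le (hk : 2 ≤ k) (i : ℕ) :
    P E k L hher (i+1) ≤ P E k L hher i := by
  set R := Rfun E k L hher i with hR
  set A := R.filter (fun v => i + 1 ∈ L v) with hA
  set S := Sstep E k L hher R i with hS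
  have hSA : S ⊆ A := Finset.filter_subset _ _
  have hAR : A ⊆ R := Finset.filter_subset _ _
  -- partition of weight of A by color classes
  have hpart : ∑ j ∈ Finset.range k, g E k L hher R i j = ∑ v ∈ A, w k L i v := by
    rw [hA]
    exact Finset.sum_fiberwise_of_maps_to
      (fun v _ => mem_range.mpr (col_lt E k hher R v)) _
  have havg : ∑ v ∈ A, w k L i v
      ≤ (k : ℝ) * g E k L hher R i (bestj E k L hher R i) := by
    rw [← hpart]
    calc ∑ j ∈ Finset.range k, g E k L hher R i j
        ≤ (Finset.range k).card • g E k L hher R i (bestj E k L hher R i) :=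
          Finset.sum_le_card_nsmul _ _ _ (bestj_spec E k L hher hk R i)
      _ = (k : ℝ) * g E k L hher R i (bestj E k L hher R i) := by
          rw [Finset.card_range]; simp [nsmul_eq_mul]
  have hgS : g E k L hher R i (bestj E k L hher R i) = ∑ v ∈ S, w k L i v := by
    rw [hS]; rfl
  -- split R \ S
  have hsplit : R \ S = (R \ A) ∪ (A \ S) := by
    ext v
    simp only [mem_sdiff, mem_union]
    constructor
    · rintro ⟨hv, hvS⟩
      by_cases hvA : v ∈ A
      · exact Or.inr ⟨hvA, hvS⟩
      · exact Or.inl ⟨hv, hvA⟩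
    · rintro (⟨hv, hvA⟩ | ⟨hvA, hvS⟩)
      · exact ⟨hv, fun hvS => hvA (hSA hvS)⟩
      · exact ⟨hAR hvA, hvS⟩
  have hdisj : Disjoint (R \ A) (A \ S) := by
    refine Finset.disjoint_left.mpr ?_
    rintro v hv hv'
    exact (mem_sdiff.mp hv).2 (mem_sdiff.mp hv').1
  have hP1 : P E k L hher (i+1) = ∑ v ∈ R \ A, w k L (i+1) v
      + ∑ v ∈ A \ S, w k L (i+1) v := by
    rw [P]
    have hstep1 : Rfun E k L hher (i+1) = R \ S := by rw [hR, hS]; rfl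
    rw [hstep1, hsplit, Finset.sum_union hdisj]
  have h1 : ∑ v ∈ R \ A, w k L (i+1) v = ∑ v ∈ R \ A, w k L i v := by
    apply Finset.sum_congr rfl
    intro v hv
    apply w_succ_of_notMem
    have hmem := (mem_sdiff.mp hv).2
    rw [hA] at hmem
    simp only [mem_filter, not_and] at hmem
    exact hmem ((mem_sdiff.mp hv).1)
  have h2 : ∑ v ∈ A \ S, w k L (i+1) v = lam k * ∑ v ∈ A \ S, w k L i v := by
    rw [Finset.mul_sum]
    apply Finset.sum_congr rfl
    intro v hv
    apply w_succ_of_mem k L hk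
    have hmem := (mem_sdiff.mp hv).1
    rw [hA] at hmem
    exact (mem_filter.mp hmem).2
  have h3 : ∑ v ∈ A \ S, w k L i v = ∑ v ∈ A, w k L i v - ∑ v ∈ S, w k L i v :=
    Finset.sum_sdiff_eq_sub hSA
  have h4 : P E k L hher i = ∑ v ∈ R \ A, w k L i v + ∑ v ∈ A, w k L i v := by
    rw [P, ← hR, ← Finset.sum_sdiff hAR]
  set wA := ∑ v ∈ A, w k L i v
  set wS := ∑ v ∈ S, w k L i v
  rw [hP1, h1, h2, h3, h4]
  have hkey : lam k * (wA - wS) ≤ wA := by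
    have h2' : (2:ℝ) ≤ (k:ℝ) := by exact_mod_cast hk
    have hk1 : (0:ℝ) < (k:ℝ) - 1 := by linarith
    have hlm : lam k * ((k:ℝ) - 1) = (k:ℝ) := div_mul_cancel₀ _ (ne_of_gt hk1)
    have hwAk : wA ≤ (k:ℝ) * wS := by rw [hgS] at havg; exact havg
    have e1 : ((k:ℝ) - 1) * (lam k * (wA - wS)) = (k:ℝ) * (wA - wS) := by
      rw [show ((k:ℝ) - 1) * (lam k * (wA - wS))
          = (lam k * ((k:ℝ) - 1)) * (wA - wS) from by ring, hlm]
    nlinarith [e1, hwAk, hk1]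
  linarith

lemma P_le_zero (hk : 2 ≤ k) (i : ℕ) : P E k L hher i ≤ P E k L hher 0 := by
  induction i with
  | zero => exact le_rfl
  | succ n ih => exact le_trans (P_succ_le E k L hher hk n) ih

lemma Rfun_empty (hk : 2 ≤ k) (hpos : ∀ v, ∀ c ∈ L v, 1 ≤ c)
    (hsum : ∑ v : V, ((k : ℝ) / ((k : ℝ) - 1)) ^ (-((L v).card : ℤ)) < 1) :
    Rfun E k L hher (Finset.univ.sup (fun v : V => (L v).sup id)) = ∅ := by
  set N := Finset.univ.sup (fun v : V => (L v).sup id) with hN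
  have hP0 : P E k L hher 0 < 1 := by
    rw [P]
    have hw0 : ∀ v : V, w k L 0 v = ((k : ℝ) / ((k : ℝ) - 1)) ^ (-((L v).card : ℤ)) := by
      intro v
      have hft : (L v).filter (fun c => 0 < c) = L v :=
        Finset.filter_true_of_mem
          (fun c hc => lt_of_lt_of_le zero_lt_one (hpos v c hc))
      rw [w, hft]; rfl
    show ∑ v ∈ Finset.univ, w k L 0 v < 1
    calc ∑ v ∈ Finset.univ, w k L 0 v
        = ∑ v : V, ((k : ℝ) / ((k : ℝ) - 1)) ^ (-((L v).card : ℤ)) :=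
          Finset.sum_congr rfl (fun v _ => hw0 v)
      _ < 1 := hsum
  by_contra hne
  obtain ⟨v, hv⟩ := Finset.nonempty_iff_ne_empty.mpr hne
  have hwv : w k L N v = 1 := by
    rw [w]
    have hfe : (L v).filter (fun c => N < c) = ∅ := by
      rw [Finset.filter_eq_empty_iff]
      intro c hc
      have h1 : c ≤ (L v).sup id := Finset.le_sup (f := id) hc
      have h2 : (L v).sup id ≤ N := Finset.le_sup (f := fun v : V => (L v).sup id) (Finset.mem_univ v)
      omega
    rw [hfe]
    simp
  have hPN : (1:ℝ) ≤ P E k L hher N := by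
    rw [← hwv, P]
    exact Finset.single_le_sum (fun x _ => le_of_lt (w_pos k L hk N x)) hv
  have := P_le_zero E k L hher hk N
  linarith

end UMAux

/-- A hereditarily `k`-colorable hypergraph with lists satisfying
`Σ_v λ^{-|L_v|} < 1`, where `λ = k/(k-1)`, admits a unique-maximum coloring
from the lists. -/
theorem um_list_coloring {V : Type*} [Fintype V] [DecidableEq V]
    (E : Finset (Finset V)) (k : ℕ) (hk : 2 ≤ k)
    (hher : HereditarilyColorable E k)
    (L : V → Finset ℕ) (hpos : ∀ v, ∀ c ∈ L v, 1 ≤ c)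
    (hsum : ∑ v : V, ((k : ℝ) / ((k : ℝ) - 1)) ^ (-((L v).card : ℤ)) < 1) :
    ∃ f : V → ℕ, (∀ v, f v ∈ L v) ∧ IsUMColoring E f := by
  classical
  set N := Finset.univ.sup (fun v : V => (L v).sup id) with hNdef
  have hempty : UMAux.Rfun E k L hher N = ∅ :=
    UMAux.Rfun_empty E k L hher hk hpos hsum
  have hex : ∀ v : V, ∃ i, v ∉ UMAux.Rfun E k L hher i := by
    intro v
    exact ⟨N, by rw [hempty]; exact Finset.notMem_empty v⟩
  set D : V → ℕ := fun v => Nat.find (hex v) with hD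
  have mem_iff : ∀ (v : V) (i : ℕ), v ∈ UMAux.Rfun E k L hher i ↔ i < D v := by
    intro v i
    constructor
    · intro h
      by_contra h'
      push_neg at h'
      exact (Nat.find_spec (hex v)) (UMAux.Rfun_anti E k L hher h' h)
    · intro h
      have := Nat.find_min (hex v) h
      exact not_not.mp this
  have hD_pos : ∀ v, 1 ≤ D v := by
    intro v
    have : v ∈ UMAux.Rfun E k L hher 0 := Finset.mem_univ v
    rw [mem_iff] at this
    omega
  have hstep : ∀ v, v ∈ UMAux.Sstep E k L hher
      (UMAux.Rfun E k L hher (D v - 1)) (D v - 1) := by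
    intro v
    have h1 : v ∈ UMAux.Rfun E k L hher (D v - 1) := by
      rw [mem_iff]; have := hD_pos v; omega
    have h2 : v ∉ UMAux.Rfun E k L hher (D v) := by
      rw [mem_iff]; omega
    have heq : D v = (D v - 1) + 1 := by have := hD_pos v; omega
    rw [heq] at h2
    have hrw : UMAux.Rfun E k L hher ((D v - 1) + 1)
        = UMAux.Rfun E k L hher (D v - 1)
          \ UMAux.Sstep E k L hher (UMAux.Rfun E k L hher (D v - 1)) (D v - 1) := rfl
    rw [hrw, Finset.mem_sdiff] at h2
    push_neg at h2
    exact h2 h1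
  have hmemL : ∀ v, D v ∈ L v := by
    intro v
    have hm := hstep v
    rw [UMAux.Sstep, Finset.mem_filter, Finset.mem_filter] at hm
    have h1 := hm.1.2
    have heq : D v - 1 + 1 = D v := by have := hD_pos v; omega
    rwa [heq] at h1
  refine ⟨D, hmemL, ?_⟩
  intro e he hene
  obtain ⟨x, hxe, hxmax⟩ := Finset.exists_max_image e D hene
  refine ⟨x, hxe, ?_⟩
  intro y hye hyx
  rcases lt_or_eq_of_le (hxmax y hye) with h | h
  · exact h
  · exfalso
    -- y has the same (maximum) color as x; derive a contradiction
    set m := D x with hm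
    have hm1 : 1 ≤ m := hD_pos x
    set R := UMAux.Rfun E k L hher (m - 1) with hRdef
    have hsub : ∀ v ∈ e ∩ R, D v = m := by
      intro v hv
      rw [Finset.mem_inter] at hv
      have h1 : m - 1 < D v := (mem_iff v (m-1)).mp hv.2
      have h2 : D v ≤ m := hxmax v hv.1
      omega
    have hcol : ∀ v ∈ e ∩ R,
        UMAux.col E k hher R v = UMAux.bestj E k L hher R (m - 1) := by
      intro v hv
      have hDv := hsub v hv
      have hSv := hstep v
      rw [hDv] at hSv
      rw [UMAux.Sstep, Finset.mem_filter] at hSv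
      exact hSv.2
    have hxR : x ∈ e ∩ R := by
      rw [Finset.mem_inter]
      exact ⟨hxe, by rw [hRdef, mem_iff]; omega⟩
    have hyR : y ∈ e ∩ R := by
      rw [Finset.mem_inter]
      refine ⟨hye, ?_⟩
      rw [hRdef, mem_iff]
      omega
    have hcard : 2 ≤ (e ∩ R).card := by
      apply Finset.one_lt_card.mpr
      exact ⟨y, hyR, x, hxR, hyx⟩
    obtain ⟨a, ha, b, hb, hab⟩ := UMAux.col_prop E k hher R e he hcard
    exact hab ((hcol a ha).trans (hcol b hb).symm)
end

section
/- A hereditarily k-colorable hypergraph on n vertices has unique-maximum choice number at most log_{k/(k-1)} n + 1. -/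
/-! Colors are handed out greedily in increasing order. A vertex that is still uncolored and has
`r` colors of its list left gets weight `q ^ r`, where `q = (k - 1) / k`. At color `m`, among the
uncolored vertices whose lists contain `m`, a heaviest class of a proper `k`-coloring of the
induced sub-hypergraph receives `m`. That class carries at least a `1 / k` fraction of their
weight, which exactly pays for the factor `1 / q` gained by the others, so the total weight never
increases. By the bound on the list sizes it starts below `1`, so no vertex ever runs out of
colors. The maximum of an edge is unique: if the vertices of the edge still uncolored at stage
`m` all receive `m`, they lie in one class, which meets the edge in at most one vertex; otherwise
the maximum is among the later colors. -/

open Finset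

theorem card_filter_le_eq_card_filter_succ_le_add (s : Finset ℕ) (m : ℕ) :
    #{c ∈ s | m ≤ c} = #{c ∈ s | m + 1 ≤ c} + if m ∈ s then 1 else 0 := by
  have herase : {c ∈ s | m + 1 ≤ c} = {c ∈ s | m ≤ c}.erase m := by
    ext c
    simp only [mem_filter, mem_erase]
    constructor
    · rintro ⟨hc, hmc⟩
      exact ⟨by omega, hc, by omega⟩
    · rintro ⟨hcm, hc, hmc⟩
      exact ⟨hc, by omega⟩
  rw [herase]
  split_ifs with hm
  · exact (card_erase_add_one (mem_filter.2 ⟨hm, le_rfl⟩)).symm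
  · rw [erase_eq_of_notMem (by simp [hm]), add_zero]

section

variable {V : Type*}

noncomputable def listPotential (L : V → Finset ℕ) (q : ℝ) (m : ℕ) (U : Finset V) : ℝ :=
  ∑ v ∈ U, q ^ #{c ∈ L v | m ≤ c}

variable [DecidableEq V] {E : Finset (Finset V)} {k : ℕ}

def IsIndepIn (E : Finset (Finset V)) (U B : Finset V) : Prop :=
  ∀ e ∈ E, e ∩ U ⊆ B → #(e ∩ U) ≤ 1

theorem IsIndepIn.mono {A U B : Finset V} (h : IsIndepIn E A B) (hBA : B ⊆ A) (hAU : A ⊆ U) :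
    IsIndepIn E U B := by
  intro e he heU
  have hUA : e ∩ U ⊆ e ∩ A := fun x hx => mem_inter.2 ⟨(mem_inter.1 hx).1, hBA (heU hx)⟩
  calc #(e ∩ U) ≤ #(e ∩ A) := card_le_card hUA
    _ ≤ 1 := h e he ((inter_subset_inter_left hAU).trans heU)

theorem HereditarilyColorable.exists_isIndepIn_sum_le (hE : HereditarilyColorable E k)
    (hk : 0 < k) (U : Finset V) (wt : V → ℝ) :
    ∃ B ⊆ U, IsIndepIn E U B ∧ ∑ v ∈ U, wt v ≤ k * ∑ v ∈ B, wt v := by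
  obtain ⟨C, hCk, hC⟩ := hE U
  obtain ⟨j, -, hj⟩ := exists_le_sum_fiber_of_maps_to_of_nsmul_le_sum
    (fun v _ => mem_range.2 (hCk v)) (nonempty_range_iff.2 hk.ne')
    (b := (∑ v ∈ U, wt v) / k) (w := wt)
    (by rw [card_range, nsmul_eq_mul, mul_div_cancel₀ _ (by exact_mod_cast hk.ne')])
  refine ⟨{v ∈ U | C v = j}, filter_subset _ _, ?_, ?_⟩
  · intro e he heB
    by_contra! h2
    obtain ⟨x, hx, y, hy, hxy⟩ := hC e he h2
    exact hxy ((mem_filter.1 (heB hx)).2.trans (mem_filter.1 (heB hy)).2.symm)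
  · rwa [div_le_iff₀' (by exact_mod_cast hk)] at hj

theorem HereditarilyColorable.exists_listPotential_sdiff_le (hE : HereditarilyColorable E k)
    (hk : 0 < k) {q : ℝ} (hq0 : 0 ≤ q) (hq : (1 - q) * k ≤ 1) (L : V → Finset ℕ) (m : ℕ)
    (U : Finset V) :
    ∃ B ⊆ U, (∀ v ∈ B, m ∈ L v) ∧ IsIndepIn E U B ∧
      listPotential L q (m + 1) (U \ B) ≤ listPotential L q m U := by
  set A := {v ∈ U | m ∈ L v}
  set g : V → ℝ := fun v => q ^ #{c ∈ L v | m + 1 ≤ c}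
  have hAU : A ⊆ U := filter_subset _ _
  obtain ⟨B, hBA, hB, hAB⟩ := hE.exists_isIndepIn_sum_le hk A g
  refine ⟨B, hBA.trans hAU, fun v hv => (mem_filter.1 (hBA hv)).2, hB.mono hBA hAU, ?_⟩
  have hpot : listPotential L q m U = ∑ v ∈ U \ A, g v + q * ∑ v ∈ A, g v := by
    rw [listPotential, ← sum_sdiff hAU, mul_sum]
    congr 1
    · refine sum_congr rfl fun v hv => ?_
      obtain ⟨hvU, hvA⟩ := mem_sdiff.1 hv
      have hm : m ∉ L v := fun hm => hvA (mem_filter.2 ⟨hvU, hm⟩)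
      simp [g, card_filter_le_eq_card_filter_succ_le_add, hm]
    · refine sum_congr rfl fun v hv => ?_
      simp [g, card_filter_le_eq_card_filter_succ_le_add, (mem_filter.1 hv).2, pow_succ']
  have hpot' : listPotential L q (m + 1) (U \ B) =
      ∑ v ∈ U \ A, g v + ∑ v ∈ A, g v - ∑ v ∈ B, g v := by
    rw [listPotential, sum_sdiff_eq_sub (hBA.trans hAU), sum_sdiff hAU]
  have hB0 : 0 ≤ ∑ v ∈ B, g v := sum_nonneg fun v _ => pow_nonneg hq0 _
  have hA0 : 0 ≤ ∑ v ∈ A, g v := sum_nonneg fun v _ => pow_nonneg hq0 _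
  rw [hpot, hpot']
  rcases le_total q 1 with hq1 | hq1
  · nlinarith [mul_le_mul_of_nonneg_left hAB (sub_nonneg.2 hq1)]
  · nlinarith

theorem IsUMColoring.extend {U B : Finset V} {f : V → ℕ} {m : ℕ}
    (hf : IsUMColoring (E.image (· ∩ (U \ B))) f) (hB : IsIndepIn E U B)
    (hfm : ∀ v ∈ U \ B, m < f v) :
    IsUMColoring (E.image (· ∩ U)) (fun v => if v ∈ B then m else f v) := by
  rintro _ he' hne
  obtain ⟨e, he, rfl⟩ := mem_image.1 he'
  by_cases hrest : (e ∩ (U \ B)).Nonempty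
  · obtain ⟨x, hx, hmax⟩ := hf _ (mem_image_of_mem _ he) hrest
    obtain ⟨hxe, hxU, hxB⟩ := by simpa only [mem_inter, mem_sdiff] using hx
    refine ⟨x, mem_inter.2 ⟨hxe, hxU⟩, fun y hy hyx => ?_⟩
    obtain ⟨hye, hyU⟩ := mem_inter.1 hy
    simp only [hxB, if_false]
    split_ifs with hyB
    · exact hfm x (mem_sdiff.2 ⟨hxU, hxB⟩)
    · exact hmax y (by simp [hye, hyU, hyB]) hyx
  · have hsub : e ∩ U ⊆ B := fun y hy => by
      by_contra hyB
      simp only [mem_inter] at hy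
      exact hrest ⟨y, mem_inter.2 ⟨hy.1, mem_sdiff.2 ⟨hy.2, hyB⟩⟩⟩
    obtain ⟨x, hx⟩ := hne
    exact ⟨x, hx, fun y hy hyx => absurd (card_le_one.1 (hB e he hsub) y hy x hx) hyx⟩

theorem HereditarilyColorable.exists_isUMColoring_of_listPotential_lt_one
    (hE : HereditarilyColorable E k) (hk : 0 < k) {q : ℝ} (hq0 : 0 ≤ q) (hq : (1 - q) * k ≤ 1)
    (L : V → Finset ℕ) (d : ℕ) :
    ∀ m U, (∀ v ∈ U, ∀ c ∈ L v, c < m + d) → listPotential L q m U < 1 →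
      ∃ f : V → ℕ, (∀ v ∈ U, f v ∈ L v ∧ m ≤ f v) ∧
        IsUMColoring (E.image (· ∩ U)) f := by
  induction d with
  | zero =>
    intro m U hL hU
    have hpot : listPotential L q m U = #U := by
      rw [listPotential, card_eq_sum_ones, Nat.cast_sum]
      refine sum_congr rfl fun v hv => ?_
      rw [filter_false_of_mem fun c hc => by simpa using hL v hv c hc]
      simp
    obtain rfl : U = ∅ := card_eq_zero.1 (Nat.lt_one_iff.1 (by exact_mod_cast hpot ▸ hU))
    exact ⟨fun _ => m, by simp, by simp [IsUMColoring]⟩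
  | succ d ih =>
    intro m U hL hU
    obtain ⟨B, -, hBm, hB, hpot⟩ := hE.exists_listPotential_sdiff_le hk hq0 hq L m U
    obtain ⟨f, hfL, hf⟩ := ih (m + 1) (U \ B)
      (fun v hv c hc => by have := hL v (mem_sdiff.1 hv).1 c hc; omega) (hpot.trans_lt hU)
    refine ⟨_, fun v hv => ?_, hf.extend hB fun v hv => (hfL v hv).2⟩
    by_cases hvB : v ∈ B
    · simp [hvB, hBm v hvB]
    · have := hfL v (mem_sdiff.2 ⟨hv, hvB⟩)
      simp only [hvB, if_false]
      exact ⟨this.1, by omega⟩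

theorem HereditarilyColorable.exists_isUMColoring_of_sum_pow_card_lt_one [Fintype V]
    (hE : HereditarilyColorable E k) (hk : 0 < k) {q : ℝ} (hq0 : 0 ≤ q) (hq : (1 - q) * k ≤ 1)
    (L : V → Finset ℕ) (hL : ∑ v, q ^ #(L v) < 1) :
    ∃ f : V → ℕ, (∀ v, f v ∈ L v) ∧ IsUMColoring E f := by
  obtain ⟨N, hN⟩ := (univ.biUnion L).exists_nat_subset_range
  obtain ⟨f, hfL, hf⟩ := hE.exists_isUMColoring_of_listPotential_lt_one hk hq0 hq L N 0 univ
    (fun v _ c hc => by simpa using hN (mem_biUnion.2 ⟨v, mem_univ v, hc⟩))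
    (by simpa [listPotential] using hL)
  exact ⟨f, fun v => (hfL v (mem_univ v)).1, by simpa using hf⟩

end

theorem inv_pow_lt_inv_of_logb_lt {w x : ℝ} (hw : 1 < w) (hx : 0 < x) {n : ℕ}
    (h : Real.logb w x < n) : w⁻¹ ^ n < x⁻¹ := by
  rw [inv_pow, inv_lt_inv₀ (by positivity) hx, ← Real.rpow_natCast]
  exact (Real.logb_lt_iff_lt_rpow hw hx).1 h

/-- A hereditarily `k`-colorable hypergraph on `n` vertices has
unique-maximum choice number at most `log_{k/(k-1)} n + 1`: from any lists of
at least that size one can choose a unique-maximum coloring. -/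
theorem um_choice_number {V : Type*} [Fintype V] [DecidableEq V]
    (E : Finset (Finset V)) (k : ℕ) (hk : 2 ≤ k)
    (hher : HereditarilyColorable E k)
    (L : V → Finset ℕ)
    (hL : ∀ v, Real.logb ((k : ℝ) / ((k : ℝ) - 1)) (Fintype.card V) + 1 ≤
      ((L v).card : ℝ)) :
    ∃ f : V → ℕ, (∀ v, f v ∈ L v) ∧ IsUMColoring E f := by
  set w : ℝ := k / (k - 1)
  have hk' : (2 : ℝ) ≤ k := by exact_mod_cast hk
  have hw : 1 < w := (one_lt_div (by linarith)).2 (by linarith)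
  have hq : (1 - w⁻¹) * k ≤ 1 := by
    rw [inv_div, one_sub_div (by positivity), sub_sub_cancel, one_div_mul_cancel (by positivity)]
  refine hher.exists_isUMColoring_of_sum_pow_card_lt_one (by omega) (by positivity) hq L ?_
  obtain hV | hV := isEmpty_or_nonempty V
  · simp
  have hn : (0 : ℝ) < Fintype.card V := by exact_mod_cast Fintype.card_pos
  calc ∑ v, w⁻¹ ^ #(L v) < ∑ _v : V, (Fintype.card V : ℝ)⁻¹ :=
        sum_lt_sum_of_nonempty univ_nonempty fun v _ =>
          inv_pow_lt_inv_of_logb_lt hw hn (by linarith [hL v])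
    _ = 1 := by simp [hn.ne']
end

section
/- Let 𝒞 be a class of colorings of hypergraphs having the refinement property (any refinement of a coloring in 𝒞 is in 𝒞). For every hypergraph H on n vertices, the 𝒞-choice number satisfies ch_𝒞(H) ≤ χ_𝒞(H) · ln n + 1. -/
private lemma aux_ratio (χ n k : ℕ) (hχ : 1 ≤ χ) (hn : 1 ≤ n)
    (hk : (χ:ℝ) * Real.log n + 1 ≤ k) :
    ((χ:ℝ) - 1)^k ≤ (χ:ℝ)^k * ((1/n) * Real.exp (-(1/χ))) := by
  have hχR : (0:ℝ) < χ := by exact_mod_cast hχ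
  have hnR : (0:ℝ) < n := by exact_mod_cast hn
  have h1 : ((χ:ℝ) - 1)^k = (χ:ℝ)^k * (1 - 1/χ)^k := by
    rw [← mul_pow]; congr 1; field_simp
  rw [h1]
  have h0 : (0:ℝ) ≤ 1 - 1/χ := by
    have : 1/(χ:ℝ) ≤ 1 := by
      rw [div_le_one hχR]; exact_mod_cast hχ
    linarith
  have hstep : (1 - 1/(χ:ℝ)) ≤ Real.exp (-(1/χ)) := by
    have := Real.add_one_le_exp (-(1/(χ:ℝ))); linarith
  have h2 : (1 - 1/(χ:ℝ))^k ≤ Real.exp (-(1/χ))^k := pow_le_pow_left₀ h0 hstep k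
  have h3 : Real.exp (-(1/(χ:ℝ)))^k = Real.exp ((k:ℝ) * (-(1/χ))) :=
    (Real.exp_nat_mul _ k).symm
  have h4 : (k:ℝ) * (-(1/χ)) ≤ -Real.log n - 1/χ := by
    have hu : (0:ℝ) < 1/χ := one_div_pos.mpr hχR
    have key : ((χ:ℝ) * Real.log n + 1) * (1/χ) ≤ (k:ℝ) * (1/χ) :=
      mul_le_mul_of_nonneg_right hk hu.le
    have hc : (χ:ℝ) * Real.log n * (1/χ) = Real.log n := by field_simp
    nlinarith [key, hc]
  have h5 : Real.exp (-Real.log n - 1/χ) = (1/n) * Real.exp (-(1/χ)) := by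
    rw [sub_eq_add_neg, Real.exp_add, Real.exp_neg, Real.exp_log hnR, one_div, one_div]
  have : (1 - 1/(χ:ℝ))^k ≤ (1/n) * Real.exp (-(1/χ)) := by
    calc (1 - 1/(χ:ℝ))^k ≤ Real.exp (-(1/χ))^k := h2
      _ = Real.exp ((k:ℝ) * (-(1/χ))) := h3
      _ ≤ Real.exp (-Real.log n - 1/χ) := Real.exp_le_exp.mpr h4
      _ = (1/n) * Real.exp (-(1/χ)) := h5
  exact mul_le_mul_of_nonneg_left this (pow_nonneg hχR.le k)

/-- For any class `𝒞` of colorings with the refinement property, the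
`𝒞`-choice number is at most `χ_𝒞 · ln n + 1`: if `H` has a `𝒞`-coloring with
`χ` colors and all lists have size at least `χ · ln n + 1`, then `H` has a
`𝒞`-coloring from the lists. -/
theorem choice_of_refinement {V : Type*} [Fintype V]
    (𝒞 : Set (V → ℕ))
    (href : ∀ C ∈ 𝒞, ∀ C' : V → ℕ, (∀ x y, C' x = C' y → C x = C y) → C' ∈ 𝒞)
    (χ : ℕ) (hχ : ∃ C ∈ 𝒞, ∀ v, C v < χ)
    (L : V → Finset ℕ)
    (hL : ∀ v, (χ : ℝ) * Real.log (Fintype.card V) + 1 ≤ ((L v).card : ℝ)) :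
    ∃ f : V → ℕ, (∀ v, f v ∈ L v) ∧ f ∈ 𝒞 := by
  classical
  obtain ⟨C, hC, hCχ⟩ := hχ
  rcases isEmpty_or_nonempty V with hV | hV
  · exact ⟨fun _ => 0, fun v => (hV.elim v), href C hC _ (fun x y _ => (hV.elim x))⟩
  have hn : 1 ≤ Fintype.card V := Fintype.card_pos
  have hχ1 : 1 ≤ χ := by
    have := hCχ (Classical.arbitrary V); omega
  set S : Finset ℕ := Finset.univ.biUnion L with hSdef
  have hLS : ∀ v, L v ⊆ S := fun v => Finset.subset_biUnion_of_mem L (Finset.mem_univ v)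
  let cv : V → Fin χ := fun v => ⟨C v, hCχ v⟩
  let Bad : V → Finset (↥S → Fin χ) := fun v =>
    Fintype.piFinset (fun a => if (a:ℕ) ∈ L v then Finset.univ.erase (cv v) else Finset.univ)
  have hkcard : ∀ v, (Finset.univ.filter (fun a : ↥S => (a:ℕ) ∈ L v)).card = (L v).card := by
    intro v
    have : (Finset.univ.filter (fun a : ↥S => (a:ℕ) ∈ L v)) = (L v).subtype (· ∈ S) := by
      ext a; simp [Finset.mem_subtype]
    rw [this, Finset.card_subtype, Finset.filter_true_of_mem (fun x hx => hLS v hx)]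
  have hBadcard : ∀ v, (Bad v).card = (χ - 1)^(L v).card * χ^(S.card - (L v).card) := by
    intro v
    rw [show (Bad v).card = ∏ a : ↥S,
        (if (a:ℕ) ∈ L v then (Finset.univ.erase (cv v)).card else (Finset.univ : Finset (Fin χ)).card)
      from by rw [Fintype.card_piFinset]; exact Finset.prod_congr rfl (fun a _ => by split <;> rfl)]
    rw [Finset.prod_ite, Finset.prod_const, Finset.prod_const]
    rw [Finset.card_erase_of_mem (Finset.mem_univ _), Finset.card_univ, Fintype.card_fin]
    rw [hkcard v]
    congr 1
    rw [Finset.filter_not, Finset.card_sdiff_of_subset (Finset.filter_subset _ _), hkcard v,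
      Finset.card_univ, Fintype.card_coe]
  have hkle : ∀ v, (L v).card ≤ S.card := fun v => Finset.card_le_card (hLS v)
  have htotal : ∑ v : V, (Bad v).card < χ ^ S.card := by
    have hχR : (0:ℝ) < χ := by exact_mod_cast hχ1
    have hR : ∀ v : V, ((Bad v).card : ℝ) ≤ (χ:ℝ)^S.card *
        ((1/(Fintype.card V : ℝ)) * Real.exp (-(1/χ))) := by
      intro v
      rw [hBadcard v]
      push_cast [Nat.cast_sub hχ1]
      calc ((χ:ℝ) - 1)^(L v).card * (χ:ℝ)^(S.card - (L v).card)
          ≤ ((χ:ℝ)^(L v).card * ((1/(Fintype.card V : ℝ)) * Real.exp (-(1/χ)))) *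
            (χ:ℝ)^(S.card - (L v).card) := by
            apply mul_le_mul_of_nonneg_right _ (pow_nonneg hχR.le _)
            exact aux_ratio χ (Fintype.card V) (L v).card hχ1 hn (hL v)
        _ = (χ:ℝ)^S.card * ((1/(Fintype.card V : ℝ)) * Real.exp (-(1/χ))) := by
            rw [mul_right_comm, ← pow_add, Nat.add_sub_cancel' (hkle v)]
    have hsum : ((∑ v : V, (Bad v).card : ℕ) : ℝ) < ((χ ^ S.card : ℕ) : ℝ) := by
      push_cast
      calc ∑ v : V, ((Bad v).card : ℝ)
          ≤ ∑ _v : V, (χ:ℝ)^S.card * ((1/(Fintype.card V : ℝ)) * Real.exp (-(1/χ))) :=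
            Finset.sum_le_sum (fun v _ => hR v)
        _ = (χ:ℝ)^S.card * Real.exp (-(1/χ)) := by
            rw [Finset.sum_const, Finset.card_univ, nsmul_eq_mul]
            field_simp
        _ < (χ:ℝ)^S.card := by
            have he : Real.exp (-(1/(χ:ℝ))) < 1 := by
              rw [Real.exp_lt_one_iff]
              exact neg_neg_iff_pos.mpr (one_div_pos.mpr hχR)
            nlinarith [pow_pos hχR S.card]
    exact_mod_cast hsum
  have hcard : (Finset.univ.biUnion Bad).card < Fintype.card (↥S → Fin χ) := by
    calc (Finset.univ.biUnion Bad).card ≤ ∑ v : V, (Bad v).card := Finset.card_biUnion_le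
      _ < χ ^ S.card := htotal
      _ = Fintype.card (↥S → Fin χ) := by
          rw [Fintype.card_fun, Fintype.card_fin, Fintype.card_coe]
  obtain ⟨g, hg⟩ : ∃ g : ↥S → Fin χ, g ∉ Finset.univ.biUnion Bad := by
    by_contra h
    push_neg at h
    have : (Finset.univ : Finset (↥S → Fin χ)).card ≤ (Finset.univ.biUnion Bad).card :=
      Finset.card_le_card (fun g _ => h g)
    rw [Finset.card_univ] at this
    omega
  let F : ℕ → ℕ := fun c => if h : c ∈ S then (g ⟨c, h⟩ : ℕ) else 0
  have hgood : ∀ v, ∃ c ∈ L v, F c = C v := by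
    intro v
    have hgv : g ∉ Bad v := fun h => hg (Finset.mem_biUnion.mpr ⟨v, Finset.mem_univ v, h⟩)
    simp only [Bad, Fintype.mem_piFinset, not_forall] at hgv
    obtain ⟨a, ha⟩ := hgv
    by_cases hmem : (a:ℕ) ∈ L v
    · refine ⟨a, hmem, ?_⟩
      rw [if_pos hmem, Finset.mem_erase] at ha
      push_neg at ha
      have hga : g a = cv v := by
        by_contra hne
        exact (ha hne) (Finset.mem_univ _)
      have : F (a:ℕ) = (g a : ℕ) := by
        simp only [F]
        rw [dif_pos a.2]
      rw [this, hga]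
    · exact absurd (by rw [if_neg hmem]; exact Finset.mem_univ _) ha
  refine ⟨fun v => (hgood v).choose, fun v => (hgood v).choose_spec.1, ?_⟩
  apply href C hC
  intro x y hxy
  have hx := (hgood x).choose_spec.2
  have hy := (hgood y).choose_spec.2
  rw [← hx, ← hy, hxy]
end

section
/- For every hypergraph H on n vertices, the conflict-free choice number satisfies ch_CF(H) ≤ χ_CF(H) · ln n + 1, and the proper choice number satisfies ch(H) ≤ χ(H) · ln n + 1. -/
/-!
Given a coloring `C` with `a` colors, map every color occurring in the lists to one of the `a`
colors uniformly at random. A vertex `v` is unlucky if no color of `L v` is sent to `C v`, which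
has probability `(1 - 1/a) ^ |L v| ≤ exp (-|L v| / a) < 1 / n`. So some map `g` leaves no vertex
unlucky, and choosing `f v ∈ L v` with `g (f v) = C v` gives a list coloring in which
`f u = f v` forces `C u = C v`. Conflict-free and proper colorings survive such a refinement.
-/

def IsProperColoring {V : Type*} (E : Finset (Finset V)) (C : V → ℕ) : Prop :=
  ∀ e ∈ E, 2 ≤ e.card → ∃ x ∈ e, ∃ y ∈ e, C x ≠ C y

open Finset Real

def Refines {V α β : Type*} (f : V → α) (C : V → β) : Prop :=
  ∀ u v, C u ≠ C v → f u ≠ f v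

theorem IsCFColoring.of_refines {V : Type*} {E : Finset (Finset V)} {C f : V → ℕ}
    (hC : IsCFColoring E C) (hf : Refines f C) : IsCFColoring E f := by
  intro e he hne
  obtain ⟨x, hx, hxu⟩ := hC e he hne
  exact ⟨x, hx, fun y hy hyx => hf y x (hxu y hy hyx)⟩

theorem IsProperColoring.of_refines {V : Type*} {E : Finset (Finset V)} {C f : V → ℕ}
    (hC : IsProperColoring E C) (hf : Refines f C) : IsProperColoring E f := by
  intro e he hcard
  obtain ⟨x, hx, y, hy, hxy⟩ := hC e he hcard
  exact ⟨x, hx, y, hy, hf x y hxy⟩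

theorem mul_sub_one_pow_lt_pow_of_mul_log_add_one_le {a n k : ℕ} (ha : 0 < a)
    (hk : (a : ℝ) * log n + 1 ≤ k) : n * (a - 1) ^ k < a ^ k := by
  have haR : (0 : ℝ) < a := by exact_mod_cast ha
  have hsub : (a : ℝ) - 1 ≤ a * exp (-(1 / a)) := by
    have := add_one_le_exp (-(1 / a))
    calc (a : ℝ) - 1 = a * (-(1 / a) + 1) := by field_simp; ring
      _ ≤ a * exp (-(1 / a)) := by gcongr
  have hsmall : (n : ℝ) * exp (-(k / a)) < 1 := by
    have hlog : log n < k / a := by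
      rw [lt_div_iff₀ haR]
      linarith
    calc (n : ℝ) * exp (-(k / a)) ≤ exp (log n) * exp (-(k / a)) := by
          gcongr
          exact le_exp_log n
      _ = exp (log n - k / a) := by rw [← exp_add, sub_eq_add_neg]
      _ < 1 := exp_lt_one_iff.mpr (by linarith)
  have hR : (n : ℝ) * ((a : ℝ) - 1) ^ k < (a : ℝ) ^ k :=
    calc (n : ℝ) * ((a : ℝ) - 1) ^ k ≤ n * (a * exp (-(1 / a))) ^ k := by
          have : (0 : ℝ) ≤ a - 1 := by linarith [(Nat.one_le_cast (α := ℝ)).mpr ha]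
          gcongr
      _ = a ^ k * (n * exp (-(k / a))) := by
          rw [mul_pow, ← exp_nat_mul]
          ring_nf
      _ < a ^ k := mul_lt_of_lt_one_right (by positivity) hsmall
  rw [← Nat.cast_lt (α := ℝ)]
  push_cast [Nat.cast_sub ha]
  exact hR

theorem card_filter_forall_mem_ne {ι β : Type*} [Fintype ι] [DecidableEq ι] [Fintype β]
    [DecidableEq β] (T : Finset ι) (y : β) :
    #{g : ι → β | ∀ i ∈ T, g i ≠ y} =
      (Fintype.card β - 1) ^ #T * Fintype.card β ^ (Fintype.card ι - #T) := by
  have hpi : ({g : ι → β | ∀ i ∈ T, g i ≠ y} : Finset (ι → β)) =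
      Fintype.piFinset fun i => if i ∈ T then univ.erase y else univ := by
    ext g
    simp only [mem_filter, mem_univ, true_and, Fintype.mem_piFinset]
    refine forall_congr' fun i => ?_
    split_ifs <;> simp [*]
  rw [hpi, Fintype.card_piFinset]
  simp_rw [apply_ite card, card_erase_of_mem (mem_univ y), card_univ]
  rw [prod_ite, prod_const, prod_const, filter_mem_eq_inter,
    univ_inter, filter_not, filter_mem_eq_inter, univ_inter, ← compl_eq_univ_sdiff, card_compl]

theorem exists_forall_exists_mem_eq_of_card_mul_lt {ι β V : Type*} [Fintype ι] [Fintype β]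
    [Fintype V] [Nonempty V] (T : V → Finset ι) (y : V → β)
    (h : ∀ v, Fintype.card V * (Fintype.card β - 1) ^ #(T v) < Fintype.card β ^ #(T v)) :
    ∃ g : ι → β, ∀ v, ∃ i ∈ T v, g i = y v := by
  classical
  set n := Fintype.card V
  set bad : V → Finset (ι → β) := fun v => {g | ∀ i ∈ T v, g i ≠ y v}
  have hβ : 0 < Fintype.card β := by
    obtain ⟨v⟩ := ‹Nonempty V›
    refine Nat.pos_of_ne_zero fun h0 => (h v).not_ge ?_
    rw [h0]
    exact Nat.le_mul_of_pos_left _ Fintype.card_pos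
  have hbad : ∀ v, n * #(bad v) < Fintype.card (ι → β) := by
    intro v
    have hT : #(T v) ≤ Fintype.card ι := card_le_univ _
    rw [card_filter_forall_mem_ne, Fintype.card_fun, ← mul_assoc,
      ← Nat.sub_add_cancel hT, pow_add, Nat.add_sub_cancel, mul_comm (_ ^ (_ - _))]
    exact Nat.mul_lt_mul_of_pos_right (h v) (by positivity)
  have hsum : ∑ v, #(bad v) < Fintype.card (ι → β) := by
    refine Nat.lt_of_mul_lt_mul_left (a := n) ?_
    calc n * ∑ v, #(bad v) = ∑ v, n * #(bad v) := mul_sum _ _ _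
      _ < ∑ _v : V, Fintype.card (ι → β) :=
          sum_lt_sum_of_nonempty univ_nonempty fun v _ => hbad v
      _ = n * Fintype.card (ι → β) := by rw [sum_const, card_univ, smul_eq_mul]
  obtain ⟨g, -, hg⟩ := exists_mem_notMem_of_card_lt_card
    (s := univ.biUnion bad) (t := univ) (card_biUnion_le.trans_lt hsum)
  refine ⟨g, fun v => ?_⟩
  have hgv : g ∉ bad v := fun hv => hg (mem_biUnion.mpr ⟨v, mem_univ v, hv⟩)
  simpa [bad] using hgv

theorem exists_mem_refines_of_mul_log_add_one_le {V : Type*} [Fintype V] (a : ℕ) (C : V → ℕ)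
    (hC : ∀ v, C v < a) (L : V → Finset ℕ)
    (hL : ∀ v, (a : ℝ) * log (Fintype.card V) + 1 ≤ #(L v)) :
    ∃ f : V → ℕ, (∀ v, f v ∈ L v) ∧ Refines f C := by
  classical
  cases isEmpty_or_nonempty V
  · exact ⟨isEmptyElim, isEmptyElim, isEmptyElim⟩
  have ha : 0 < a := (Nat.zero_le _).trans_lt (hC (Classical.arbitrary V))
  set S := univ.biUnion L
  let T : V → Finset S := fun v => (L v).subtype (· ∈ S)
  have hT : ∀ v, #(T v) = #(L v) := fun v => by
    rw [card_subtype, filter_true_of_mem fun c hc => subset_biUnion_of_mem L (mem_univ v) hc]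
  obtain ⟨g, hg⟩ :=
    exists_forall_exists_mem_eq_of_card_mul_lt T (fun v => (⟨C v, hC v⟩ : Fin a)) fun v => by
      rw [Fintype.card_fin, hT]
      exact mul_sub_one_pow_lt_pow_of_mul_log_add_one_le ha (hL v)
  choose c hcT hgc using hg
  refine ⟨fun v => c v, fun v => mem_subtype.mp (hcT v), fun u v hne hfe => hne ?_⟩
  have hguv := congrArg g (Subtype.ext hfe : c u = c v)
  rw [hgc, hgc] at hguv
  exact congrArg Fin.val hguv

/-- `ch_CF(H) ≤ χ_CF(H) · ln n + 1` and `ch(H) ≤ χ(H) · ln n + 1`: if `H` has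
a conflict-free (resp. proper) coloring with `a` (resp. `b`) colors, then
from any lists of size at least `a · ln n + 1` (resp. `b · ln n + 1`) one can
choose a conflict-free (resp. proper) coloring. -/
theorem cf_and_proper_choice {V : Type*} [Fintype V]
    (E : Finset (Finset V)) (a b : ℕ)
    (hcf : ∃ C : V → ℕ, (∀ v, C v < a) ∧ IsCFColoring E C)
    (hpr : ∃ C : V → ℕ, (∀ v, C v < b) ∧ IsProperColoring E C)
    (L : V → Finset ℕ) :
    ((∀ v, (a : ℝ) * Real.log (Fintype.card V) + 1 ≤ ((L v).card : ℝ)) →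
      ∃ f : V → ℕ, (∀ v, f v ∈ L v) ∧ IsCFColoring E f) ∧
    ((∀ v, (b : ℝ) * Real.log (Fintype.card V) + 1 ≤ ((L v).card : ℝ)) →
      ∃ f : V → ℕ, (∀ v, f v ∈ L v) ∧ IsProperColoring E f) := by
  refine ⟨fun hLa => ?_, fun hLb => ?_⟩
  · obtain ⟨C, hCa, hC⟩ := hcf
    obtain ⟨f, hfL, hfC⟩ := exists_mem_refines_of_mul_log_add_one_le a C hCa L hLa
    exact ⟨f, hfL, hC.of_refines hfC⟩
  · obtain ⟨C, hCb, hC⟩ := hpr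
    obtain ⟨f, hfL, hfC⟩ := exists_mem_refines_of_mul_log_add_one_le b C hCb L hLb
    exact ⟨f, hfL, hC.of_refines hfC⟩
end

section
/- For the subdivided complete graph K'_s (obtained from K_s by subdividing every edge once), the pointed-neighborhood conflict-free chromatic parameter equals s, while the (closed) neighborhood conflict-free chromatic parameter equals 2 for s ≥ 2. -/
/-!
Each subdivision vertex has exactly two neighbors, both original vertices, and a pointed
conflict-free coloring must separate them; hence the `s` original vertices get distinct colors.
Conversely `s` colors suffice: color `i` by `i` and the subdivision vertex of `{i, j}` by
`i + j mod s`, which is injective on every pointed neighborhood. For closed neighborhoods, the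
bipartition of `K'_s` is a proper 2-coloring, and one color cannot work as soon as there is an edge.
-/

/-- `C` is conflict-free for pointed neighborhoods: every nonempty pointed
neighborhood `Ṅ(v)` contains a uniquely colored vertex. -/
def PointedCF {W : Type*} (G : SimpleGraph W) (C : W → ℕ) : Prop :=
  ∀ v, (∃ u, G.Adj v u) →
    ∃ u, G.Adj v u ∧ ∀ w, G.Adj v w → w ≠ u → C w ≠ C u

/-- `C` is conflict-free for closed neighborhoods: every closed neighborhood
`N(v) = {v} ∪ Γ(v)` contains a uniquely colored vertex. -/
def ClosedCF {W : Type*} (G : SimpleGraph W) (C : W → ℕ) : Prop :=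
  ∀ v, ∃ u, (u = v ∨ G.Adj v u) ∧
    ∀ w, (w = v ∨ G.Adj v w) → w ≠ u → C w ≠ C u

noncomputable def pointedCFNum {W : Type*} (G : SimpleGraph W) : ℕ :=
  sInf {k | ∃ C : W → ℕ, (∀ v, C v < k) ∧ PointedCF G C}

noncomputable def closedCFNum {W : Type*} (G : SimpleGraph W) : ℕ :=
  sInf {k | ∃ C : W → ℕ, (∀ v, C v < k) ∧ ClosedCF G C}

/-- The adjacency of the subdivided complete graph `K'_s`: the original
vertices are `Fin s`, and each pair `i < j` gets a subdivision vertex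
adjacent exactly to `i` and `j`. -/
def KsubAdj (s : ℕ) :
    (Fin s ⊕ {p : Fin s × Fin s // p.1 < p.2}) →
    (Fin s ⊕ {p : Fin s × Fin s // p.1 < p.2}) → Prop
  | Sum.inl i, Sum.inr e => i = e.1.1 ∨ i = e.1.2
  | Sum.inr e, Sum.inl i => i = e.1.1 ∨ i = e.1.2
  | _, _ => False

/-- The subdivided complete graph `K'_s`. -/
def Ksub (s : ℕ) : SimpleGraph (Fin s ⊕ {p : Fin s × Fin s // p.1 < p.2}) where
  Adj := KsubAdj s
  symm := by
    constructor
    intro x y h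
    cases x <;> cases y <;> simp_all [KsubAdj]
  loopless := by
    constructor
    intro x h
    cases x <;> simp_all [KsubAdj]

section ConflictFree

variable {W : Type*} {G : SimpleGraph W} {C : W → ℕ}

lemma PointedCF.of_injOn_neighborSet (h : ∀ v, Set.InjOn C (G.neighborSet v)) :
    PointedCF G C := by
  rintro v ⟨u, hu⟩
  exact ⟨u, hu, fun w hw hwu hC => hwu (h v hw hu hC)⟩

lemma PointedCF.ne_of_neighborSet_eq_pair (hC : PointedCF G C) {v a b : W} (hab : a ≠ b)
    (hv : G.neighborSet v = {a, b}) : C a ≠ C b := by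
  have hmem : ∀ {w}, G.Adj v w ↔ w = a ∨ w = b := by
    intro w
    rw [← G.mem_neighborSet, hv, Set.mem_insert_iff, Set.mem_singleton_iff]
  obtain ⟨u, hu, huniq⟩ := hC v ⟨a, hmem.2 (Or.inl rfl)⟩
  rcases hmem.1 hu with rfl | rfl
  · exact (huniq b (hmem.2 (Or.inr rfl)) hab.symm).symm
  · exact huniq a (hmem.2 (Or.inl rfl)) hab

lemma ClosedCF.of_adj_ne (h : ∀ ⦃v w⦄, G.Adj v w → C v ≠ C w) : ClosedCF G C := by
  refine fun v => ⟨v, Or.inl rfl, ?_⟩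
  rintro w (rfl | hw) hwv
  exacts [(hwv rfl).elim, (h hw).symm]

lemma ClosedCF.exists_ne_of_adj (hC : ClosedCF G C) {v w : W} (hvw : G.Adj v w) :
    ∃ x y, C x ≠ C y := by
  obtain ⟨u, hu, huniq⟩ := hC v
  by_cases huv : u = v
  · subst huv
    exact ⟨w, u, huniq w (Or.inr hvw) hvw.ne'⟩
  · exact ⟨v, u, huniq v (Or.inl rfl) (Ne.symm huv)⟩

end ConflictFree

namespace Ksub

variable {s : ℕ}

lemma not_adj_inl_inl (i j : Fin s) : ¬ (Ksub s).Adj (.inl i) (.inl j) := id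

lemma not_adj_inr_inr (e f : {p : Fin s × Fin s // p.1 < p.2}) :
    ¬ (Ksub s).Adj (.inr e) (.inr f) := id

lemma neighborSet_inr (e : {p : Fin s × Fin s // p.1 < p.2}) :
    (Ksub s).neighborSet (.inr e) = {.inl e.1.1, .inl e.1.2} := by
  ext (j | f)
  · simp [Ksub, KsubAdj]
  · simpa using not_adj_inr_inr e f

lemma edge_eq_of_add_eq {i : Fin s} {e f : {p : Fin s × Fin s // p.1 < p.2}}
    (he : i = e.1.1 ∨ i = e.1.2) (hf : i = f.1.1 ∨ i = f.1.2)
    (h : e.1.1 + e.1.2 = f.1.1 + f.1.2) : e = f := by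
  have : NeZero s := ⟨i.pos.ne'⟩
  obtain ⟨⟨a, b⟩, hab⟩ := e
  obtain ⟨⟨c, d⟩, hcd⟩ := f
  simp only at he hf h hab hcd
  rcases he with rfl | rfl <;> rcases hf with rfl | rfl
  · obtain rfl := add_left_cancel h
    rfl
  · obtain rfl := add_left_cancel (h.trans (add_comm c i))
    exact (hab.trans hcd).false.elim
  · obtain rfl := add_left_cancel ((add_comm i a).trans h)
    exact (hab.trans hcd).false.elim
  · obtain rfl := add_right_cancel h
    rfl

lemma sum_elim_ne_of_adj :
    ∀ ⦃v w⦄, (Ksub s).Adj v w →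
      Sum.elim (fun _ => 0) (fun _ => 1) v ≠ Sum.elim (fun _ => (0 : ℕ)) (fun _ => 1) w
  | .inl _, .inr _, _ => zero_ne_one
  | .inr _, .inl _, _ => one_ne_zero

end Ksub

def ksubColoring (s : ℕ) : Fin s ⊕ {p : Fin s × Fin s // p.1 < p.2} → ℕ
  | .inl i => i
  | .inr e => (e.1.1 + e.1.2 : Fin s)

lemma ksubColoring_lt {s : ℕ} (v : Fin s ⊕ {p : Fin s × Fin s // p.1 < p.2}) :
    ksubColoring s v < s := by
  cases v <;> exact Fin.isLt _

lemma ksubColoring_injOn_neighborSet {s : ℕ} (v : Fin s ⊕ {p : Fin s × Fin s // p.1 < p.2}) :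
    Set.InjOn (ksubColoring s) ((Ksub s).neighborSet v) := by
  rcases v with i | e
  · rintro (j | f) hf (k | g) hg hfg
    · exact (Ksub.not_adj_inl_inl i j hf).elim
    · exact (Ksub.not_adj_inl_inl i j hf).elim
    · exact (Ksub.not_adj_inl_inl i k hg).elim
    · exact congrArg Sum.inr (Ksub.edge_eq_of_add_eq hf hg (Fin.ext hfg))
  · rintro (j | f) hf (k | g) hg hfg
    · exact congrArg Sum.inl (Fin.ext hfg)
    · exact (Ksub.not_adj_inr_inr e g hg).elim
    · exact (Ksub.not_adj_inr_inr e f hf).elim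
    · exact (Ksub.not_adj_inr_inr e f hf).elim

lemma PointedCF.injective_ksub_inl {s : ℕ} {C : Fin s ⊕ {p : Fin s × Fin s // p.1 < p.2} → ℕ}
    (hC : PointedCF (Ksub s) C) : Function.Injective (C ∘ Sum.inl) := by
  have key : ∀ i j : Fin s, i < j → C (.inl i) ≠ C (.inl j) := fun i j hij =>
    hC.ne_of_neighborSet_eq_pair (by simpa using hij.ne) (Ksub.neighborSet_inr ⟨(i, j), hij⟩)
  intro i j hij
  by_contra hne
  rcases lt_or_gt_of_ne hne with h | h
  exacts [key i j h hij, key j i h hij.symm]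

/-- For the subdivided complete graph `K'_s` with `s ≥ 2`, the pointed
conflict-free chromatic parameter equals `s` while the closed-neighborhood
conflict-free chromatic parameter equals `2`. -/
theorem ksub_cf_params (s : ℕ) (hs : 2 ≤ s) :
    pointedCFNum (Ksub s) = s ∧ closedCFNum (Ksub s) = 2 := by
  refine ⟨IsLeast.csInf_eq ⟨?_, ?_⟩, IsLeast.csInf_eq ⟨?_, ?_⟩⟩
  · exact ⟨ksubColoring s, ksubColoring_lt,
      PointedCF.of_injOn_neighborSet ksubColoring_injOn_neighborSet⟩
  · rintro k ⟨C, hlt, hC⟩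
    simpa using Fin.le_of_injective (fun i => (⟨C (.inl i), hlt _⟩ : Fin k))
      fun i j hij => hC.injective_ksub_inl (Fin.val_eq_of_eq hij)
  · exact ⟨Sum.elim (fun _ => 0) (fun _ => 1), by rintro (_ | _) <;> simp,
      ClosedCF.of_adj_ne Ksub.sum_elim_ne_of_adj⟩
  · rintro k ⟨C, hlt, hC⟩
    let e : {p : Fin s × Fin s // p.1 < p.2} := ⟨(⟨0, by omega⟩, ⟨1, by omega⟩), by simp⟩
    obtain ⟨x, y, hxy⟩ := hC.exists_ne_of_adj (v := .inr e) (w := .inl e.1.1) (Or.inl rfl)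
    have := hlt x
    have := hlt y
    omega
end

section
/- For any graph G, κ_CF(G) ≤ 2·κ̇_CF(G), where κ_CF and κ̇_CF are the conflict-free chromatic parameters for closed and pointed neighborhoods respectively. -/
/-- For any graph `G`, `κ_CF(G) ≤ 2 · κ̇_CF(G)`. -/
theorem closed_le_two_mul_pointed {W : Type*} [Fintype W] (G : SimpleGraph W) :
    closedCFNum G ≤ 2 * pointedCFNum G := by
  classical
  obtain ⟨ι, hιinj, hιlt⟩ : ∃ ι : W → ℕ, Function.Injective ι ∧
      ∀ v, ι v < Fintype.card W :=
    ⟨fun v => ((Fintype.equivFin W) v : ℕ),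
     fun a b h => (Fintype.equivFin W).injective (Fin.val_injective h),
     fun v => ((Fintype.equivFin W) v).isLt⟩
  -- the pointed set is nonempty
  have hne : {k | ∃ C : W → ℕ, (∀ v, C v < k) ∧ PointedCF G C}.Nonempty := by
    refine ⟨Fintype.card W, ι, hιlt, ?_⟩
    rintro v ⟨u, hu⟩
    exact ⟨u, hu, fun w hw hwu h => hwu (hιinj h)⟩
  have hkmem := Nat.sInf_mem hne
  obtain ⟨C, hC, hCF⟩ := hkmem
  obtain ⟨K, hKdef⟩ : ∃ K, pointedCFNum G = K := ⟨_, rfl⟩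
  rw [show sInf {k | ∃ C : W → ℕ, (∀ v, C v < k) ∧ PointedCF G C} = K from hKdef] at hC
  -- P v u : u is the unique class-neighbor of v (same color, only one such)
  obtain ⟨P, hPdef⟩ : ∃ P : W → W → Prop, ∀ v u,
      P v u ↔ (G.Adj v u ∧ C u = C v ∧ ∀ w, G.Adj v w → C w = C v → w = u) :=
    ⟨fun v u => G.Adj v u ∧ C u = C v ∧ ∀ w, G.Adj v w → C w = C v → w = u,
     fun _ _ => Iff.rfl⟩
  obtain ⟨b, hbdef⟩ : ∃ b : W → ℕ, ∀ v,
      b v = if ∃ u, P v u ∧ (¬ P u v ∨ ι v < ι u) then 1 else 0 :=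
    ⟨fun v => if ∃ u, P v u ∧ (¬ P u v ∨ ι v < ι u) then 1 else 0, fun _ => rfl⟩
  have hble : ∀ v, b v ≤ 1 := by
    intro v; rw [hbdef]; split <;> omega
  have hbound : ∀ v, 2 * C v + b v < 2 * K := by
    intro v
    have h1 := hC v
    have h2 := hble v
    omega
  have hclosed : ClosedCF G (fun v => 2 * C v + b v) := by
    intro v
    by_cases hdeg : ∃ u, G.Adj v u
    · obtain ⟨u, hadj, huniq⟩ := hCF v hdeg
      refine ⟨u, Or.inr hadj, ?_⟩
      rintro w (rfl | hw) hwu hDeq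
      · -- w = v : show contradiction from D v = D u
        simp only at hDeq
        have h1 := hble w; have h2 := hble u
        have hCeq : C w = C u := by omega
        have hbeq : b w = b u := by omega
        have hPv : P w u := by
          rw [hPdef]
          refine ⟨hadj, hCeq.symm, fun w' hw' hcw' => ?_⟩
          by_contra hne'
          exact huniq w' hw' hne' (hcw'.trans hCeq)
        have hwitv : ∀ x, P w x → x = u := fun x hx =>
          ((hPdef w u).1 hPv).2.2 x ((hPdef w x).1 hx).1 ((hPdef w x).1 hx).2.1
        have hwitu : ∀ x, P u x → x = w := fun x hx =>
          (((hPdef u x).1 hx).2.2 w hadj.symm hCeq).symm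
        have hιne : ι w ≠ ι u := fun h => hwu (hιinj h)
        by_cases hPuv : P u w
        · rcases lt_or_gt_of_ne hιne with hlt | hgt
          · have hbw : b w = 1 := by
              rw [hbdef]; exact if_pos ⟨u, hPv, Or.inr hlt⟩
            have hbu : b u = 0 := by
              rw [hbdef]
              refine if_neg ?_
              rintro ⟨x, hx, hor⟩
              have hxw : x = w := hwitu x hx
              subst hxw
              rcases hor with h | h
              · exact h hPv
              · omega
            omega
          · have hbu : b u = 1 := by
              rw [hbdef]; exact if_pos ⟨w, hPuv, Or.inr hgt⟩
            have hbw : b w = 0 := by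
              rw [hbdef]
              refine if_neg ?_
              rintro ⟨x, hx, hor⟩
              have hxu : x = u := hwitv x hx
              subst hxu
              rcases hor with h | h
              · exact h hPuv
              · omega
            omega
        · have hbw : b w = 1 := by
            rw [hbdef]; exact if_pos ⟨u, hPv, Or.inl hPuv⟩
          have hbu : b u = 0 := by
            rw [hbdef]
            refine if_neg ?_
            rintro ⟨x, hx, _⟩
            exact hPuv ((hwitu x hx) ▸ hx)
          omega
      · -- w a neighbor of v, w ≠ u
        simp only at hDeq
        have h1 := hble w; have h2 := hble u
        have hCeq : C w = C u := by omega
        exact huniq w hw hwu hCeq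
    · refine ⟨v, Or.inl rfl, ?_⟩
      rintro w (rfl | hw) hwv
      · exact absurd rfl hwv
      · exact absurd ⟨w, hw⟩ hdeg
  rw [hKdef]
  exact Nat.sInf_le ⟨fun v => 2 * C v + b v, hbound, hclosed⟩
end
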